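/- arXiv:2311.00011 — 10 statements merged into one kernel-verified Lean document; each statement's English description precedes it below -/
import Mathlib

section
/- Let w ∈ ℂ with w ≠ 0 and w² ≠ 1, and fix r₁, r₂ ∈ ℂ with r₁² = 1 + w and r₂² = 1 − w (note r₁, r₂ ≠ 0). Set A₁ := 1/(2r₁) + 1/(2·i·r₂) and A₂ := 1/(2r₁) − 1/(2·i·r₂). Then for all x, y ∈ ℂ, writing f := (A₁x + A₂y)/√2 and g := (A₂x + A₁y)/√2, one has f² + 2w·f·g + g² = x·y. -/
/-! With `a = 1/(2r₁)` and `b = 1/(2ir₂)` one has `A₁ = a + b` and `A₂ = a - b`, so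
`f + g = √2 a (x + y)` and `f - g = √2 b (x - y)`. In these coordinates the form diagonalises,
`2 (f² + 2wfg + g²) = (1 + w)(f + g)² + (1 - w)(f - g)²`, and since `4(1 + w) a² = 1` and
`4(1 - w) b² = -1` the right side is `((x + y)² - (x - y)²)/2 = 2xy`. -/

theorem two_mul_sq_add_two_mul_mul_add_sq {R : Type*} [CommRing R] (w f g : R) :
    2 * (f ^ 2 + 2 * w * f * g + g ^ 2) = (1 + w) * (f + g) ^ 2 + (1 - w) * (f - g) ^ 2 := by
  ring

theorem sq_add_two_mul_mul_add_sq_eq_mul {K : Type*} [Field K] {w a b s : K} (hs : s ^ 2 = 2)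
    (ha : 4 * (1 + w) * a ^ 2 = 1) (hb : 4 * (1 - w) * b ^ 2 = -1) (x y : K) :
    (((a + b) * x + (a - b) * y) / s) ^ 2
      + 2 * w * (((a + b) * x + (a - b) * y) / s) * (((a - b) * x + (a + b) * y) / s)
      + (((a - b) * x + (a + b) * y) / s) ^ 2 = x * y := by
  have h4 : (4 : K) ≠ 0 := left_ne_zero_of_mul (left_ne_zero_of_mul_eq_one ha)
  have h2 : (2 : K) ≠ 0 := left_ne_zero_of_mul (a := (2 : K)) (b := 2) (by norm_num [h4])
  have hsum : ((a + b) * x + (a - b) * y) / s + ((a - b) * x + (a + b) * y) / s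
      = 2 * a * (x + y) / s := by ring
  have hdiff : ((a + b) * x + (a - b) * y) / s - ((a - b) * x + (a + b) * y) / s
      = 2 * b * (x - y) / s := by ring
  apply mul_left_cancel₀ h2
  rw [two_mul_sq_add_two_mul_mul_add_sq, hsum, hdiff, div_pow, div_pow, hs]
  field_simp
  apply mul_left_cancel₀ h4
  linear_combination (x + y) ^ 2 * ha + (x - y) ^ 2 * hb

theorem stmt_0_general (w r₁ r₂ A₁ A₂ : ℂ) (hw2 : w ^ 2 ≠ 1)
    (hr₁ : r₁ ^ 2 = 1 + w) (hr₂ : r₂ ^ 2 = 1 - w)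
    (hA₁ : A₁ = 1 / (2 * r₁) + 1 / (2 * Complex.I * r₂))
    (hA₂ : A₂ = 1 / (2 * r₁) - 1 / (2 * Complex.I * r₂))
    (x y : ℂ) :
    ((A₁ * x + A₂ * y) / (Real.sqrt 2 : ℂ)) ^ 2
      + 2 * w * ((A₁ * x + A₂ * y) / (Real.sqrt 2 : ℂ))
          * ((A₂ * x + A₁ * y) / (Real.sqrt 2 : ℂ))
      + ((A₂ * x + A₁ * y) / (Real.sqrt 2 : ℂ)) ^ 2 = x * y := by
  have hr₁0 : r₁ ≠ 0 := by
    rintro rfl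
    exact hw2 (by linear_combination (1 - w) * hr₁)
  have hr₂0 : r₂ ≠ 0 := by
    rintro rfl
    exact hw2 (by linear_combination (1 + w) * hr₂)
  have hs : ((Real.sqrt 2 : ℝ) : ℂ) ^ 2 = 2 := by
    norm_cast
    exact Real.sq_sqrt zero_le_two
  have ha : 4 * (1 + w) * (1 / (2 * r₁)) ^ 2 = 1 := by
    rw [← hr₁]
    field_simp
    norm_num
  have hb : 4 * (1 - w) * (1 / (2 * Complex.I * r₂)) ^ 2 = -1 := by
    rw [← hr₂, div_pow, mul_pow, mul_pow, Complex.I_sq]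
    field_simp
    norm_num
  subst hA₁ hA₂
  exact sq_add_two_mul_mul_add_sq_eq_mul hs ha hb x y

theorem stmt_0 (w r₁ r₂ A₁ A₂ : ℂ) (hw : w ≠ 0) (hw2 : w ^ 2 ≠ 1)
    (hr₁ : r₁ ^ 2 = 1 + w) (hr₂ : r₂ ^ 2 = 1 - w)
    (hA₁ : A₁ = 1 / (2 * r₁) + 1 / (2 * Complex.I * r₂))
    (hA₂ : A₂ = 1 / (2 * r₁) - 1 / (2 * Complex.I * r₂))
    (x y : ℂ) :
    ((A₁ * x + A₂ * y) / (Real.sqrt 2 : ℂ)) ^ 2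
      + 2 * w * ((A₁ * x + A₂ * y) / (Real.sqrt 2 : ℂ))
          * ((A₂ * x + A₁ * y) / (Real.sqrt 2 : ℂ))
      + ((A₂ * x + A₁ * y) / (Real.sqrt 2 : ℂ)) ^ 2 = x * y :=
  stmt_0_general w r₁ r₂ A₁ A₂ hw2 hr₁ hr₂ hA₁ hA₂ x y
end

section
/- Let n ≥ 1, let c ∈ ℂⁿ, and let P be a polynomial in n variables with complex coefficients (viewed as a function ℂⁿ → ℂ) such that P(z + c) − P(z) = η for all z ∈ ℂⁿ, for some constant η ∈ ℂ. Then there exist a₁, …, aₙ ∈ ℂ with a₁c₁ + ⋯ + aₙcₙ = η and a polynomial Q in n variables with complex coefficients satisfying Q(z + c) = Q(z) for all z ∈ ℂⁿ, such that P(z) = a₁z₁ + ⋯ + aₙzₙ + Q(z) for all z ∈ ℂⁿ. -/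
theorem stmt_5 (n : ℕ) (hn : 1 ≤ n) (c : Fin n → ℂ) (P : MvPolynomial (Fin n) ℂ)
    (η : ℂ) (h : ∀ z : Fin n → ℂ, MvPolynomial.eval (z + c) P - MvPolynomial.eval z P = η) :
    ∃ (a : Fin n → ℂ) (Q : MvPolynomial (Fin n) ℂ),
      (∑ j, a j * c j) = η ∧
      (∀ z : Fin n → ℂ, MvPolynomial.eval (z + c) Q = MvPolynomial.eval z Q) ∧
      (∀ z : Fin n → ℂ, MvPolynomial.eval z P = (∑ j, a j * z j) + MvPolynomial.eval z Q) := by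
  by_cases hη : η = 0
  · refine ⟨0, P, by simp [hη], fun z => ?_, fun z => by simp⟩
    have := h z
    rw [hη, sub_eq_zero] at this
    exact this
  · -- c ≠ 0
    have hc : c ≠ 0 := by
      intro hc0
      apply hη
      have := h 0
      simp [hc0] at this
      exact this.symm
    obtain ⟨j, hj⟩ : ∃ j, c j ≠ 0 := by
      by_contra hcon
      push_neg at hcon
      exact hc (funext fun k => hcon k)
    set a : Fin n → ℂ := fun k => if k = j then η / c j else 0 with ha
    have hsum : ∀ z : Fin n → ℂ, (∑ k, a k * z k) = (η / c j) * z j := by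
      intro z
      rw [Finset.sum_eq_single j]
      · simp [ha]
      · intro k _ hk; simp [ha, hk]
      · intro hk; exact absurd (Finset.mem_univ j) hk
    refine ⟨a, P - MvPolynomial.C (η / c j) * MvPolynomial.X j, ?_, fun z => ?_, fun z => ?_⟩
    · rw [hsum]; field_simp
    · have h1 := h z
      simp only [map_sub, map_mul, MvPolynomial.eval_C, MvPolynomial.eval_X, Pi.add_apply]
      have : (η / c j) * c j = η := by field_simp
      linear_combination h1 - this
    · rw [hsum]
      simp only [map_sub, map_mul, MvPolynomial.eval_C, MvPolynomial.eval_X]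
      ring
end

section
/- Let n ≥ 1, c ∈ ℂⁿ, and let w ∈ ℂ with w ≠ 0 and w² ≠ 1; fix r₁, r₂ ∈ ℂ with r₁² = 1 + w, r₂² = 1 − w and set A₁ := 1/(2r₁) + 1/(2·i·r₂), A₂ := 1/(2r₁) − 1/(2·i·r₂). Let ξ₁, ξ₂ ∈ ℂ \ {0} with A₁ξ₁ + A₂ξ₁⁻¹ ≠ 0 and A₁ξ₂ + A₂ξ₂⁻¹ ≠ 0, let a₁, …, aₙ ∈ ℂ and set L(z) := a₁z₁ + ⋯ + aₙzₙ, let Φ : ℂⁿ → ℂ satisfy Φ(z + c) = Φ(z) for all z, and let d₁, d₂ ∈ ℂ satisfy exp((L(c) + d₁ − d₂)/2) = (A₂ξ₂ + A₁ξ₂⁻¹)/(A₁ξ₁ + A₂ξ₁⁻¹) and exp((L(c) + d₂ − d₁)/2) = (A₂ξ₁ + A₁ξ₁⁻¹)/(A₁ξ₂ + A₂ξ₂⁻¹). Define f(z) := ((A₁ξ₁ + A₂ξ₁⁻¹)/√2)·exp((L(z) + Φ(z) + d₁)/2) and g(z) := ((A₁ξ₂ + A₂ξ₂⁻¹)/√2)·exp((L(z)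 + Φ(z) + d₂)/2). Then for all z ∈ ℂⁿ: f(z)² + 2w·f(z)·g(z + c) + g(z + c)² = exp(L(z) + Φ(z) + d₁) and g(z)² + 2w·g(z)·f(z + c) + f(z + c)² = exp(L(z) + Φ(z) + d₂). -/
private theorem keylem' (w r₁ r₂ A₁ A₂ : ℂ) (hw2 : w ^ 2 ≠ 1)
    (hr₁ : r₁ ^ 2 = 1 + w) (hr₂ : r₂ ^ 2 = 1 - w)
    (hA₁ : A₁ = 1 / (2 * r₁) + 1 / (2 * Complex.I * r₂))
    (hA₂ : A₂ = 1 / (2 * r₁) - 1 / (2 * Complex.I * r₂))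
    (ξ : ℂ) (hξ : ξ ≠ 0) :
    (A₁*ξ+A₂*ξ⁻¹)^2 + 2*w*(A₁*ξ+A₂*ξ⁻¹)*(A₂*ξ+A₁*ξ⁻¹) + (A₂*ξ+A₁*ξ⁻¹)^2 = 2 := by
  have h1 : (1:ℂ) + w ≠ 0 := by intro h; apply hw2; linear_combination (w-1)*h
  have h2 : (1:ℂ) - w ≠ 0 := by intro h; apply hw2; linear_combination (-w-1)*h
  have e1 : r₁ ≠ 0 := by intro h; apply h1; rw [← hr₁, h]; ring
  have e2 : r₂ ≠ 0 := by intro h; apply h2; rw [← hr₂, h]; ring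
  have hd : (1:ℂ) - w^2 ≠ 0 := by intro h; apply hw2; linear_combination -h
  have h2' : (-1:ℂ) + w ≠ 0 := by intro h; apply hw2; linear_combination (w+1)*h
  have h2'' : w - (1:ℂ) ≠ 0 := by intro h; apply hw2; linear_combination (w+1)*h
  have hI2 : Complex.I^2 = -1 := Complex.I_sq
  have hs : A₁ + A₂ = 1/r₁ := by
    rw [hA₁, hA₂]; field_simp [Complex.I_ne_zero]; ring
  have hq : A₁ - A₂ = 1/(Complex.I*r₂) := by
    rw [hA₁, hA₂]; field_simp [Complex.I_ne_zero]; ring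
  have B1 : (1 - w^2) * (A₁^2 + A₂^2) = -w := by
    have h : A₁^2 + A₂^2 = ((A₁+A₂)^2 + (A₁-A₂)^2)/2 := by ring
    rw [h, hs, hq, div_pow, div_pow, mul_pow, hI2, hr₁, hr₂]
    field_simp [h2', h2'']; ring
  have B2 : (2*(1 - w^2)) * (A₁ * A₂) = 1 := by
    have h : A₁ * A₂ = ((A₁+A₂)^2 - (A₁-A₂)^2)/4 := by ring
    rw [h, hs, hq, div_pow, div_pow, mul_pow, hI2, hr₁, hr₂]
    field_simp [h2', h2'']; ring
  have C1 : A₁^2 + A₂^2 + 2*w*(A₁*A₂) = 0 := by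
    apply mul_left_cancel₀ hd
    linear_combination B1 + w*B2
  have C2 : 4*(A₁*A₂) + 2*w*(A₁^2+A₂^2) = 2 := by
    apply mul_left_cancel₀ hd
    linear_combination 2*B2 + 2*w*B1
  have hinv : ξ * ξ⁻¹ = 1 := mul_inv_cancel₀ hξ
  linear_combination (ξ^2+ξ⁻¹^2)*C1 + (ξ*ξ⁻¹)*C2 + 2*hinv

private theorem quadlem' (w P P' s E : ℂ) (hs : s^2 = 2)
    (hK : P^2+2*w*P*P'+P'^2 = 2) :
    (P/s*E)^2 + 2*w*(P/s*E)*(P'/s*E) + (P'/s*E)^2 = E*E := by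
  have h : (P/s*E)^2 + 2*w*(P/s*E)*(P'/s*E) + (P'/s*E)^2
      = (P^2+2*w*P*P'+P'^2) * E^2 / s^2 := by ring
  rw [h, hK, hs]; ring

theorem stmt_8 (n : ℕ) (hn : 1 ≤ n) (c : Fin n → ℂ) (w r₁ r₂ A₁ A₂ : ℂ)
    (hw : w ≠ 0) (hw2 : w ^ 2 ≠ 1)
    (hr₁ : r₁ ^ 2 = 1 + w) (hr₂ : r₂ ^ 2 = 1 - w)
    (hA₁ : A₁ = 1 / (2 * r₁) + 1 / (2 * Complex.I * r₂))
    (hA₂ : A₂ = 1 / (2 * r₁) - 1 / (2 * Complex.I * r₂))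
    (ξ₁ ξ₂ : ℂ) (hξ₁ : ξ₁ ≠ 0) (hξ₂ : ξ₂ ≠ 0)
    (hne₁ : A₁ * ξ₁ + A₂ * ξ₁⁻¹ ≠ 0) (hne₂ : A₁ * ξ₂ + A₂ * ξ₂⁻¹ ≠ 0)
    (a : Fin n → ℂ) (L : (Fin n → ℂ) → ℂ) (hL : ∀ z, L z = ∑ j, a j * z j)
    (Φ : (Fin n → ℂ) → ℂ) (hΦ : ∀ z, Φ (z + c) = Φ z)
    (d₁ d₂ : ℂ)
    (hd₁ : Complex.exp ((L c + d₁ - d₂) / 2)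
      = (A₂ * ξ₂ + A₁ * ξ₂⁻¹) / (A₁ * ξ₁ + A₂ * ξ₁⁻¹))
    (hd₂ : Complex.exp ((L c + d₂ - d₁) / 2)
      = (A₂ * ξ₁ + A₁ * ξ₁⁻¹) / (A₁ * ξ₂ + A₂ * ξ₂⁻¹))
    (f g : (Fin n → ℂ) → ℂ)
    (hf : ∀ z, f z = ((A₁ * ξ₁ + A₂ * ξ₁⁻¹) / (Real.sqrt 2 : ℂ))
      * Complex.exp ((L z + Φ z + d₁) / 2))
    (hg : ∀ z, g z = ((A₁ * ξ₂ + A₂ * ξ₂⁻¹) / (Real.sqrt 2 : ℂ))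
      * Complex.exp ((L z + Φ z + d₂) / 2)) :
    ∀ z : Fin n → ℂ,
      f z ^ 2 + 2 * w * f z * g (z + c) + g (z + c) ^ 2
        = Complex.exp (L z + Φ z + d₁) ∧
      g z ^ 2 + 2 * w * g z * f (z + c) + f (z + c) ^ 2
        = Complex.exp (L z + Φ z + d₂) := by
  intro z
  have hs2 : ((Real.sqrt 2 : ℝ) : ℂ)^2 = 2 := by
    rw [← Complex.ofReal_pow, Real.sq_sqrt (by norm_num : (0:ℝ) ≤ 2)]
    norm_num
  have hLadd : L (z + c) = L z + L c := by
    simp only [hL, Pi.add_apply, mul_add, Finset.sum_add_distrib]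
  have hgzc : g (z + c) = ((A₂ * ξ₁ + A₁ * ξ₁⁻¹) / (Real.sqrt 2 : ℂ))
      * Complex.exp ((L z + Φ z + d₁) / 2) := by
    rw [hg, hΦ, hLadd]
    have h : (L z + L c + Φ z + d₂)/2
        = (L z + Φ z + d₁)/2 + (L c + d₂ - d₁)/2 := by ring
    rw [h, Complex.exp_add, hd₂]
    have hc := mul_div_cancel₀ (A₂ * ξ₁ + A₁ * ξ₁⁻¹) hne₂
    linear_combination (Complex.exp ((L z + Φ z + d₁) / 2) / (Real.sqrt 2 : ℂ)) * hc
  have hfzc : f (z + c) = ((A₂ * ξ₂ + A₁ * ξ₂⁻¹) / (Real.sqrt 2 : ℂ))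
      * Complex.exp ((L z + Φ z + d₂) / 2) := by
    rw [hf, hΦ, hLadd]
    have h : (L z + L c + Φ z + d₁)/2
        = (L z + Φ z + d₂)/2 + (L c + d₁ - d₂)/2 := by ring
    rw [h, Complex.exp_add, hd₁]
    have hc := mul_div_cancel₀ (A₂ * ξ₂ + A₁ * ξ₂⁻¹) hne₁
    linear_combination (Complex.exp ((L z + Φ z + d₂) / 2) / (Real.sqrt 2 : ℂ)) * hc
  have K₁ := keylem' w r₁ r₂ A₁ A₂ hw2 hr₁ hr₂ hA₁ hA₂ ξ₁ hξ₁
  have K₂ := keylem' w r₁ r₂ A₁ A₂ hw2 hr₁ hr₂ hA₁ hA₂ ξ₂ hξ₂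
  constructor
  · rw [hf, hgzc]
    have hE : Complex.exp (L z + Φ z + d₁)
        = Complex.exp ((L z + Φ z + d₁)/2) * Complex.exp ((L z + Φ z + d₁)/2) := by
      rw [← Complex.exp_add]; ring_nf
    rw [hE]
    exact quadlem' w _ _ _ _ hs2 K₁
  · rw [hg, hfzc]
    have hE : Complex.exp (L z + Φ z + d₂)
        = Complex.exp ((L z + Φ z + d₂)/2) * Complex.exp ((L z + Φ z + d₂)/2) := by
      rw [← Complex.exp_add]; ring_nf
    rw [hE]
    exact quadlem' w _ _ _ _ hs2 K₂
end

section
/- Let n ≥ 1, c ∈ ℂⁿ, and let w ∈ ℂ with w ≠ 0 and w² ≠ 1; fix r₁, r₂ ∈ ℂ with r₁² = 1 + w, r₂² = 1 − w and set A₁ := 1/(2r₁) + 1/(2·i·r₂), A₂ := 1/(2r₁) − 1/(2·i·r₂). Let a₁, …, aₙ, b₁, …, bₙ ∈ ℂ and set L₁(z) := Σⱼ aⱼzⱼ, L₂(z) := Σⱼ bⱼzⱼ; let Φ, Ψ : ℂⁿ → ℂ satisfy Φ(z + c) = Φ(z) and Ψ(z + c) = Ψ(z) for all z; and let d₁, d₂,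 d₃, d₄ ∈ ℂ satisfy exp(L₁(c) + d₁ − d₂) = 1, exp(L₁(c) + d₂ − d₁) = 1, exp(L₂(c) + d₃ − d₄) = 1 and exp(L₂(c) + d₄ − d₃) = 1. Define f(z) := (A₁·exp(L₁(z) + Φ(z) + d₁) + A₂·exp(L₂(z) + Ψ(z) + d₃))/√2 and g(z) := (A₁·exp(L₂(z) + Ψ(z) + d₄) + A₂·exp(L₁(z) + Φ(z) + d₂))/√2. Then for all z ∈ ℂⁿ: f(z)² + 2w·f(z)·g(z + c) + g(z + c)² = exp(L₁(z) + L₂(z) + Φ(z) + Ψ(z) + d₁ + d₃) and g(z)² + 2w·g(z)·f(z + c) + f(z + c)² = exp(L₁(z) + L₂(z) + Φ(z) + Ψ(z) + d₂ + d₄). -/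
theorem stmt_9 (n : ℕ) (hn : 1 ≤ n) (c : Fin n → ℂ) (w r₁ r₂ A₁ A₂ : ℂ)
    (hw : w ≠ 0) (hw2 : w ^ 2 ≠ 1)
    (hr₁ : r₁ ^ 2 = 1 + w) (hr₂ : r₂ ^ 2 = 1 - w)
    (hA₁ : A₁ = 1 / (2 * r₁) + 1 / (2 * Complex.I * r₂))
    (hA₂ : A₂ = 1 / (2 * r₁) - 1 / (2 * Complex.I * r₂))
    (a b : Fin n → ℂ) (L₁ L₂ : (Fin n → ℂ) → ℂ)
    (hL₁ : ∀ z, L₁ z = ∑ j, a j * z j) (hL₂ : ∀ z, L₂ z = ∑ j, b j * z j)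
    (Φ Ψ : (Fin n → ℂ) → ℂ) (hΦ : ∀ z, Φ (z + c) = Φ z) (hΨ : ∀ z, Ψ (z + c) = Ψ z)
    (d₁ d₂ d₃ d₄ : ℂ)
    (h₁ : Complex.exp (L₁ c + d₁ - d₂) = 1)
    (h₂ : Complex.exp (L₁ c + d₂ - d₁) = 1)
    (h₃ : Complex.exp (L₂ c + d₃ - d₄) = 1)
    (h₄ : Complex.exp (L₂ c + d₄ - d₃) = 1)
    (f g : (Fin n → ℂ) → ℂ)
    (hf : ∀ z, f z = (A₁ * Complex.exp (L₁ z + Φ z + d₁)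
      + A₂ * Complex.exp (L₂ z + Ψ z + d₃)) / (Real.sqrt 2 : ℂ))
    (hg : ∀ z, g z = (A₁ * Complex.exp (L₂ z + Ψ z + d₄)
      + A₂ * Complex.exp (L₁ z + Φ z + d₂)) / (Real.sqrt 2 : ℂ)) :
    ∀ z : Fin n → ℂ,
      f z ^ 2 + 2 * w * f z * g (z + c) + g (z + c) ^ 2
        = Complex.exp (L₁ z + L₂ z + Φ z + Ψ z + d₁ + d₃) ∧
      g z ^ 2 + 2 * w * g z * f (z + c) + f (z + c) ^ 2
        = Complex.exp (L₁ z + L₂ z + Φ z + Ψ z + d₂ + d₄) := by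
  have hw1 : (1 : ℂ) + w ≠ 0 := by
    intro h
    apply hw2
    have hwm : w = -1 := by linear_combination h
    rw [hwm]; ring
  have hw1' : (1 : ℂ) - w ≠ 0 := by
    intro h
    apply hw2
    have hwm : w = 1 := by linear_combination -h
    rw [hwm]; ring
  have hr1 : r₁ ≠ 0 := by
    intro h; apply hw1; rw [h] at hr₁; simpa using hr₁.symm
  have hr2 : r₂ ≠ 0 := by
    intro h; apply hw1'; rw [h] at hr₂; simpa using hr₂.symm
  have hI : Complex.I ≠ 0 := Complex.I_ne_zero
  have hsum : A₁ + A₂ = 1 / r₁ := by rw [hA₁, hA₂]; ring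
  have hdiff : A₁ - A₂ = 1 / (Complex.I * r₂) := by rw [hA₁, hA₂]; ring
  have e₁ : (1 + w) * (A₁ + A₂) ^ 2 = 1 := by
    rw [hsum]
    field_simp
    linear_combination -hr₁
  have e₂ : (1 - w) * (A₁ - A₂) ^ 2 = -1 := by
    rw [hdiff]
    have hIr : (Complex.I * r₂) ^ 2 = -(1 - w) := by
      rw [mul_pow, Complex.I_sq, hr₂]; ring
    rw [div_pow, one_pow, hIr, div_neg, mul_neg, mul_one_div, div_self hw1']
  -- squared sqrt 2
  have hs : ((Real.sqrt 2 : ℝ) : ℂ) ^ 2 = 2 := by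
    norm_cast
    rw [Real.sq_sqrt]; norm_num
  have hsne : ((Real.sqrt 2 : ℝ) : ℂ) ≠ 0 := by
    intro h
    rw [h] at hs
    norm_num at hs
  -- key algebraic identity
  have key : ∀ u v : ℂ,
      ((A₁ * u + A₂ * v) / (Real.sqrt 2 : ℂ)) ^ 2
        + 2 * w * ((A₁ * u + A₂ * v) / (Real.sqrt 2 : ℂ)) * ((A₁ * v + A₂ * u) / (Real.sqrt 2 : ℂ))
        + ((A₁ * v + A₂ * u) / (Real.sqrt 2 : ℂ)) ^ 2 = u * v := by
    intro u v
    have key' : (A₁ * u + A₂ * v) ^ 2 + 2 * w * ((A₁ * u + A₂ * v) * (A₁ * v + A₂ * u))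
        + (A₁ * v + A₂ * u) ^ 2 = 2 * (u * v) := by
      linear_combination ((u + v) ^ 2 / 2) * e₁ + ((u - v) ^ 2 / 2) * e₂
    rw [show ((A₁ * u + A₂ * v) / (Real.sqrt 2 : ℂ)) ^ 2
        + 2 * w * ((A₁ * u + A₂ * v) / (Real.sqrt 2 : ℂ)) * ((A₁ * v + A₂ * u) / (Real.sqrt 2 : ℂ))
        + ((A₁ * v + A₂ * u) / (Real.sqrt 2 : ℂ)) ^ 2
        = ((A₁ * u + A₂ * v) ^ 2 + 2 * w * ((A₁ * u + A₂ * v) * (A₁ * v + A₂ * u))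
          + (A₁ * v + A₂ * u) ^ 2) / (Real.sqrt 2 : ℂ) ^ 2 by ring, hs, key']
    ring
  -- linearity of L₁, L₂
  have hL1add : ∀ z, L₁ (z + c) = L₁ z + L₁ c := by
    intro z
    simp [hL₁, Pi.add_apply, mul_add, Finset.sum_add_distrib]
  have hL2add : ∀ z, L₂ (z + c) = L₂ z + L₂ c := by
    intro z
    simp [hL₂, Pi.add_apply, mul_add, Finset.sum_add_distrib]
  intro z
  constructor
  · have hgz : g (z + c) = (A₁ * Complex.exp (L₂ z + Ψ z + d₃)
        + A₂ * Complex.exp (L₁ z + Φ z + d₁)) / (Real.sqrt 2 : ℂ) := by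
      rw [hg, hL1add, hL2add, hΦ, hΨ]
      congr 2
      · rw [show L₂ z + L₂ c + Ψ z + d₄ = (L₂ z + Ψ z + d₃) + (L₂ c + d₄ - d₃) by ring,
          Complex.exp_add, h₄, mul_one]
      · rw [show L₁ z + L₁ c + Φ z + d₂ = (L₁ z + Φ z + d₁) + (L₁ c + d₂ - d₁) by ring,
          Complex.exp_add, h₂, mul_one]
    rw [hf, hgz]
    rw [show A₁ * Complex.exp (L₂ z + Ψ z + d₃) + A₂ * Complex.exp (L₁ z + Φ z + d₁)
        = A₁ * Complex.exp (L₂ z + Ψ z + d₃) + A₂ * Complex.exp (L₁ z + Φ z + d₁) from rfl]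
    rw [key (Complex.exp (L₁ z + Φ z + d₁)) (Complex.exp (L₂ z + Ψ z + d₃))]
    rw [← Complex.exp_add]; congr 1; ring
  · have hfz : f (z + c) = (A₁ * Complex.exp (L₁ z + Φ z + d₂)
        + A₂ * Complex.exp (L₂ z + Ψ z + d₄)) / (Real.sqrt 2 : ℂ) := by
      rw [hf, hL1add, hL2add, hΦ, hΨ]
      congr 2
      · rw [show L₁ z + L₁ c + Φ z + d₁ = (L₁ z + Φ z + d₂) + (L₁ c + d₁ - d₂) by ring,
          Complex.exp_add, h₁, mul_one]
      · rw [show L₂ z + L₂ c + Ψ z + d₃ = (L₂ z + Ψ z + d₄) + (L₂ c + d₃ - d₄) by ring,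
          Complex.exp_add, h₃, mul_one]
    rw [hg, hfz]
    rw [key (Complex.exp (L₂ z + Ψ z + d₄)) (Complex.exp (L₁ z + Φ z + d₂))]
    rw [← Complex.exp_add]; congr 1; ring
end

section
/- Let n ≥ 1, c ∈ ℂⁿ, and let w ∈ ℂ with w ≠ 0 and w² ≠ 1; fix r₁, r₂ ∈ ℂ with r₁² = 1 + w, r₂² = 1 − w and set A₁ := 1/(2r₁) + 1/(2·i·r₂), A₂ := 1/(2r₁) − 1/(2·i·r₂). Let a₁, …, aₙ, b₁, …, bₙ ∈ ℂ and set L₁(z) := Σⱼ aⱼzⱼ, L₂(z) := Σⱼ bⱼzⱼ; let Φ, Ψ : ℂⁿ → ℂ satisfy Φ(z + c) = Φ(z) and Ψ(z + c) = Ψ(z) for all z; and let d₁, d₂, d₃, d₄ ∈ ℂ satisfy A₁·exp(L₁(c) + d₁ − d₂) = A₂, A₁·exp(L₁(c) + d₂ − d₁) = A₂, A₂·exp(L₂(c) + d₃ − d₄) = A₁ and A₂·exp(L₂(c) + d₄ − d₃) = A₁. Define f(z) := (A₁·exp(L₁(z) + Φ(z) + d₁) + A₂·exp(L₂(z) + Ψ(z)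 + d₃))/√2 and g(z) := (A₁·exp(L₁(z) + Φ(z) + d₂) + A₂·exp(L₂(z) + Ψ(z) + d₄))/√2. Then for all z ∈ ℂⁿ: f(z)² + 2w·f(z)·g(z + c) + g(z + c)² = exp(L₁(z) + L₂(z) + Φ(z) + Ψ(z) + d₁ + d₃) and g(z)² + 2w·g(z)·f(z + c) + f(z + c)² = exp(L₁(z) + L₂(z) + Φ(z) + Ψ(z) + d₂ + d₄). -/
/-!
Write U and V for the two exponentials in f(z). The relations between the dᵢ make the shift
z ↦ z + c swap the coefficients A₁ and A₂, so g(z + c) = (A₂U + A₁V)/√2, and symmetrically for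
f(z + c). The choice of A₁ and A₂ makes x² + 2wxy + y² at x = (A₁U + A₂V)/√2,
y = (A₂U + A₁V)/√2 equal to UV, and UV is the exponential on the right-hand side.
-/

open Complex

section QuadraticForm

variable {w A₁ A₂ : ℂ}

/- With α = 1/(2r₁) and β = 1/(2ir₂) one has (1 + w)α² = 1/4 and (1 - w)β² = -1/4, while
A₁² + A₂² = 2(α² + β²) and A₁A₂ = α² - β². -/
lemma coeff_relations {r₁ r₂ : ℂ} (hw2 : w ^ 2 ≠ 1)
    (hr₁ : r₁ ^ 2 = 1 + w) (hr₂ : r₂ ^ 2 = 1 - w)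
    (hA₁ : A₁ = 1 / (2 * r₁) + 1 / (2 * I * r₂))
    (hA₂ : A₂ = 1 / (2 * r₁) - 1 / (2 * I * r₂)) :
    A₁ ^ 2 + A₂ ^ 2 + 2 * w * A₁ * A₂ = 0 ∧ 4 * A₁ * A₂ + 2 * w * (A₁ ^ 2 + A₂ ^ 2) = 2 := by
  have hr₁0 : r₁ ≠ 0 := by
    rintro rfl
    exact hw2 (by linear_combination (1 - w) * hr₁)
  have hr₂0 : r₂ ≠ 0 := by
    rintro rfl
    exact hw2 (by linear_combination (1 + w) * hr₂)
  have hα : (1 + w) * (1 / (2 * r₁)) ^ 2 = 1 / 4 := by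
    field_simp
    linear_combination -4 * hr₁
  have hβ : (1 - w) * (1 / (2 * I * r₂)) ^ 2 = -(1 / 4) := by
    field_simp
    linear_combination -4 * hr₂ + 4 * r₂ ^ 2 * I_sq
  subst hA₁ hA₂
  exact ⟨by linear_combination 2 * hα + 2 * hβ, by linear_combination 4 * hα - 4 * hβ⟩

lemma quadForm_div_sqrt_two (h₀ : A₁ ^ 2 + A₂ ^ 2 + 2 * w * A₁ * A₂ = 0)
    (h₁ : 4 * A₁ * A₂ + 2 * w * (A₁ ^ 2 + A₂ ^ 2) = 2) (U V : ℂ) :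
    ((A₁ * U + A₂ * V) / (Real.sqrt 2 : ℂ)) ^ 2
      + 2 * w * ((A₁ * U + A₂ * V) / (Real.sqrt 2 : ℂ)) * ((A₂ * U + A₁ * V) / (Real.sqrt 2 : ℂ))
      + ((A₂ * U + A₁ * V) / (Real.sqrt 2 : ℂ)) ^ 2 = U * V := by
  have hs : ((Real.sqrt 2 : ℝ) : ℂ) ^ 2 = 2 := by
    norm_cast
    exact Real.sq_sqrt zero_le_two
  have hs0 : ((Real.sqrt 2 : ℝ) : ℂ) ≠ 0 := by
    intro h
    simp [h] at hs
  field_simp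
  linear_combination (U ^ 2 + V ^ 2) * h₀ + U * V * h₁ - U * V * hs

lemma mul_exp_shift {A B s d d' p : ℂ} (h : A * exp (s + d' - d) = B) :
    A * exp (p + s + d') = B * exp (p + d) := by
  rw [← h, mul_assoc, ← exp_add]
  ring_nf

lemma quadForm_shift_eq_exp {E : Type*} [Add E] (h₀ : A₁ ^ 2 + A₂ ^ 2 + 2 * w * A₁ * A₂ = 0)
    (h₁ : 4 * A₁ * A₂ + 2 * w * (A₁ ^ 2 + A₂ ^ 2) = 2)
    {P Q F G : E → ℂ} {c : E} {s t d d' e e' : ℂ}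
    (hP : ∀ z, P (z + c) = P z + s) (hQ : ∀ z, Q (z + c) = Q z + t)
    (h : A₁ * exp (s + d' - d) = A₂) (h' : A₂ * exp (t + e' - e) = A₁)
    (hF : ∀ z, F z = (A₁ * exp (P z + d) + A₂ * exp (Q z + e)) / (Real.sqrt 2 : ℂ))
    (hG : ∀ z, G z = (A₁ * exp (P z + d') + A₂ * exp (Q z + e')) / (Real.sqrt 2 : ℂ)) (z : E) :
    F z ^ 2 + 2 * w * F z * G (z + c) + G (z + c) ^ 2 = exp (P z + Q z + d + e) := by
  have hGc : G (z + c) = (A₂ * exp (P z + d) + A₁ * exp (Q z + e)) / (Real.sqrt 2 : ℂ) := by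
    rw [hG, hP, hQ, mul_exp_shift h, mul_exp_shift h']
  rw [hF, hGc, quadForm_div_sqrt_two h₀ h₁, ← exp_add]
  ring_nf

end QuadraticForm

lemma sum_mul_add_apply {n : ℕ} (a z c : Fin n → ℂ) :
    ∑ j, a j * (z + c) j = ∑ j, a j * z j + ∑ j, a j * c j := by
  simp only [Pi.add_apply, mul_add, Finset.sum_add_distrib]

theorem stmt_10_general (n : ℕ) (c : Fin n → ℂ) (w r₁ r₂ A₁ A₂ : ℂ)
    (hw2 : w ^ 2 ≠ 1)
    (hr₁ : r₁ ^ 2 = 1 + w) (hr₂ : r₂ ^ 2 = 1 - w)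
    (hA₁ : A₁ = 1 / (2 * r₁) + 1 / (2 * Complex.I * r₂))
    (hA₂ : A₂ = 1 / (2 * r₁) - 1 / (2 * Complex.I * r₂))
    (a b : Fin n → ℂ) (L₁ L₂ : (Fin n → ℂ) → ℂ)
    (hL₁ : ∀ z, L₁ z = ∑ j, a j * z j) (hL₂ : ∀ z, L₂ z = ∑ j, b j * z j)
    (Φ Ψ : (Fin n → ℂ) → ℂ) (hΦ : ∀ z, Φ (z + c) = Φ z) (hΨ : ∀ z, Ψ (z + c) = Ψ z)
    (d₁ d₂ d₃ d₄ : ℂ)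
    (h₁ : A₁ * Complex.exp (L₁ c + d₁ - d₂) = A₂)
    (h₂ : A₁ * Complex.exp (L₁ c + d₂ - d₁) = A₂)
    (h₃ : A₂ * Complex.exp (L₂ c + d₃ - d₄) = A₁)
    (h₄ : A₂ * Complex.exp (L₂ c + d₄ - d₃) = A₁)
    (f g : (Fin n → ℂ) → ℂ)
    (hf : ∀ z, f z = (A₁ * Complex.exp (L₁ z + Φ z + d₁)
      + A₂ * Complex.exp (L₂ z + Ψ z + d₃)) / (Real.sqrt 2 : ℂ))
    (hg : ∀ z, g z = (A₁ * Complex.exp (L₁ z + Φ z + d₂)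
      + A₂ * Complex.exp (L₂ z + Ψ z + d₄)) / (Real.sqrt 2 : ℂ)) :
    ∀ z : Fin n → ℂ,
      f z ^ 2 + 2 * w * f z * g (z + c) + g (z + c) ^ 2
        = Complex.exp (L₁ z + L₂ z + Φ z + Ψ z + d₁ + d₃) ∧
      g z ^ 2 + 2 * w * g z * f (z + c) + f (z + c) ^ 2
        = Complex.exp (L₁ z + L₂ z + Φ z + Ψ z + d₂ + d₄) := by
  obtain ⟨hA_sq, hA_mul⟩ := coeff_relations hw2 hr₁ hr₂ hA₁ hA₂
  have hP : ∀ z, L₁ (z + c) + Φ (z + c) = L₁ z + Φ z + L₁ c := fun z => by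
    rw [hL₁, hL₁, hL₁, sum_mul_add_apply, hΦ]; ring
  have hQ : ∀ z, L₂ (z + c) + Ψ (z + c) = L₂ z + Ψ z + L₂ c := fun z => by
    rw [hL₂, hL₂, hL₂, sum_mul_add_apply, hΨ]; ring
  intro z
  constructor
  · convert quadForm_shift_eq_exp hA_sq hA_mul hP hQ h₂ h₄ hf hg z using 2; ring
  · convert quadForm_shift_eq_exp hA_sq hA_mul hP hQ h₁ h₃ hg hf z using 2; ring

theorem stmt_10 (n : ℕ) (hn : 1 ≤ n) (c : Fin n → ℂ) (w r₁ r₂ A₁ A₂ : ℂ)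
    (hw : w ≠ 0) (hw2 : w ^ 2 ≠ 1)
    (hr₁ : r₁ ^ 2 = 1 + w) (hr₂ : r₂ ^ 2 = 1 - w)
    (hA₁ : A₁ = 1 / (2 * r₁) + 1 / (2 * Complex.I * r₂))
    (hA₂ : A₂ = 1 / (2 * r₁) - 1 / (2 * Complex.I * r₂))
    (a b : Fin n → ℂ) (L₁ L₂ : (Fin n → ℂ) → ℂ)
    (hL₁ : ∀ z, L₁ z = ∑ j, a j * z j) (hL₂ : ∀ z, L₂ z = ∑ j, b j * z j)
    (Φ Ψ : (Fin n → ℂ) → ℂ) (hΦ : ∀ z, Φ (z + c) = Φ z) (hΨ : ∀ z, Ψ (z + c) = Ψ z)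
    (d₁ d₂ d₃ d₄ : ℂ)
    (h₁ : A₁ * Complex.exp (L₁ c + d₁ - d₂) = A₂)
    (h₂ : A₁ * Complex.exp (L₁ c + d₂ - d₁) = A₂)
    (h₃ : A₂ * Complex.exp (L₂ c + d₃ - d₄) = A₁)
    (h₄ : A₂ * Complex.exp (L₂ c + d₄ - d₃) = A₁)
    (f g : (Fin n → ℂ) → ℂ)
    (hf : ∀ z, f z = (A₁ * Complex.exp (L₁ z + Φ z + d₁)
      + A₂ * Complex.exp (L₂ z + Ψ z + d₃)) / (Real.sqrt 2 : ℂ))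
    (hg : ∀ z, g z = (A₁ * Complex.exp (L₁ z + Φ z + d₂)
      + A₂ * Complex.exp (L₂ z + Ψ z + d₄)) / (Real.sqrt 2 : ℂ)) :
    ∀ z : Fin n → ℂ,
      f z ^ 2 + 2 * w * f z * g (z + c) + g (z + c) ^ 2
        = Complex.exp (L₁ z + L₂ z + Φ z + Ψ z + d₁ + d₃) ∧
      g z ^ 2 + 2 * w * g z * f (z + c) + f (z + c) ^ 2
        = Complex.exp (L₁ z + L₂ z + Φ z + Ψ z + d₂ + d₄) :=
  stmt_10_general n c w r₁ r₂ A₁ A₂ hw2 hr₁ hr₂ hA₁ hA₂ a b L₁ L₂ hL₁ hL₂ Φ Ψ hΦ hΨ d₁ d₂ d₃ d₄ h₁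
    h₂ h₃ h₄ f g hf hg
end

section
/- Let k ≥ 1 be an integer, c = (c₁, c₂) ∈ ℂ², and let w ∈ ℂ with w ≠ 0 and w² ≠ 1; fix r₁, r₂ ∈ ℂ with r₁² = 1 + w, r₂² = 1 − w and set A₁ := 1/(2r₁) + 1/(2·i·r₂), A₂ := 1/(2r₁) − 1/(2·i·r₂). Let ξ₁, ξ₂ ∈ ℂ \ {0} with A₁ξ₁ + A₂ξ₁⁻¹ ≠ 0 and A₁ξ₂ + A₂ξ₂⁻¹ ≠ 0, let a₁, a₂ ∈ ℂ and set 𝓛(z₁, z₂) := a₁z₁ + a₂z₂, let χ : ℂ → ℂ satisfy χ(t + c₂) = χ(t) for all t ∈ ℂ, and let d₁, d₂ ∈ ℂ satisfy exp((𝓛(c) + d₁ − d₂)/2) = (a₁/2)ᵏ·(A₂ξ₂ + A₁ξ₂⁻¹)/(A₁ξ₁ + A₂ξ₁⁻¹) and exp((𝓛(c) + d₂ − d₁)/2) = (a₁/2)ᵏ·(A₂ξ₁ + A₁ξ₁⁻¹)/(A₁ξ₂ + A₂ξ₂⁻¹). Define f(z₁, z₂) := ((A₂ξ₂ + A₁ξ₂⁻¹)/√2)·exp((𝓛(z)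 + χ(z₂) − 𝓛(c) + d₂)/2) and g(z₁, z₂) := ((A₂ξ₁ + A₁ξ₁⁻¹)/√2)·exp((𝓛(z) + χ(z₂) − 𝓛(c) + d₁)/2). Then for all (z₁, z₂) ∈ ℂ²: (∂ᵏf/∂z₁ᵏ)(z)² + 2w·(∂ᵏf/∂z₁ᵏ)(z)·g(z₁ + c₁, z₂ + c₂) + g(z₁ + c₁, z₂ + c₂)² = exp(𝓛(z) + χ(z₂) + d₁) and (∂ᵏg/∂z₁ᵏ)(z)² + 2w·(∂ᵏg/∂z₁ᵏ)(z)·f(z₁ + c₁, z₂ + c₂) + f(z₁ + c₁, z₂ + c₂)² = exp(𝓛(z) + χ(z₂) + d₂). -/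
/-!
Along each line `z₂ = const`, `f` is a constant times `exp (a₁ t / 2)`, so `∂ᵏf/∂z₁ᵏ = (a₁/2)ᵏ f`,
and the normalisation of `d₁ - d₂` turns this into `P / √2 · e^{(𝓛(z) + χ(z₂) + d₁)/2}` with
`P = A₁ξ₁ + A₂ξ₁⁻¹`; by periodicity of `χ`, `g(z + c)` is `Q / √2` times the same exponential,
`Q = A₂ξ₁ + A₁ξ₁⁻¹`. The left side is therefore `e^{𝓛(z) + χ(z₂) + d₁} (P² + 2wPQ + Q²) / 2`, and
`P² + 2wPQ + Q² = 2` because `r₁² = 1 + w`, `r₂² = 1 - w` give `(1 - w²)(A₁² + A₂²) = -w` and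
`(1 - w²) · 2A₁A₂ = 1`. The second equation is the first with the roles of `f` and `g` exchanged.
-/

open Complex

section CharZero
variable {K : Type*} [Field K] [CharZero K]

theorem four_mul_mul_one_div_two_mul_sq {r a : K} (hr : r ^ 2 = a) (ha : a ≠ 0) :
    4 * a * (1 / (2 * r)) ^ 2 = 1 := by
  have hr0 : r ≠ 0 := by rintro rfl; exact ha (by simpa using hr.symm)
  rw [← hr]
  field_simp
  norm_num

theorem coeff_relations_of_four_mul_sq {w u v : K} (hu : 4 * (1 + w) * u ^ 2 = 1)
    (hv : 4 * (1 - w) * v ^ 2 = -1) :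
    (1 - w ^ 2) * ((u + v) ^ 2 + (u - v) ^ 2) = -w ∧
      (1 - w ^ 2) * (2 * (u + v) * (u - v)) = 1 := by
  constructor
  · linear_combination (1 - w) / 2 * hu + (1 + w) / 2 * hv
  · linear_combination (1 - w) / 2 * hu - (1 + w) / 2 * hv

end CharZero

theorem quadratic_form_eq_two {K : Type*} [Field K] {w A₁ A₂ ξ : K} (hw : 1 - w ^ 2 ≠ 0)
    (hξ : ξ ≠ 0) (hsq : (1 - w ^ 2) * (A₁ ^ 2 + A₂ ^ 2) = -w)
    (hmul : (1 - w ^ 2) * (2 * A₁ * A₂) = 1) :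
    (A₁ * ξ + A₂ * ξ⁻¹) ^ 2 + 2 * w * (A₁ * ξ + A₂ * ξ⁻¹) * (A₂ * ξ + A₁ * ξ⁻¹)
      + (A₂ * ξ + A₁ * ξ⁻¹) ^ 2 = 2 := by
  refine mul_left_cancel₀ hw ?_
  have hξξ : ξ * ξ⁻¹ = 1 := mul_inv_cancel₀ hξ
  -- the form is `(ξ² + ξ⁻²)(A₁² + A₂² + 2wA₁A₂) + 2(2A₁A₂ + w(A₁² + A₂²))`
  linear_combination (ξ ^ 2 + ξ⁻¹ ^ 2 + 2 * w) * hsq + (2 + w * (ξ ^ 2 + ξ⁻¹ ^ 2)) * hmul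
    + (1 - w ^ 2) * (2 * w * (A₁ ^ 2 + A₂ ^ 2) + 4 * A₁ * A₂) * hξξ

theorem iteratedDeriv_const_mul_cexp_mul_add (k : ℕ) (C a b z : ℂ) :
    iteratedDeriv k (fun t => C * exp (a * t + b)) z = a ^ k * (C * exp (a * z + b)) := by
  have hsplit : (fun t => C * exp (a * t + b)) = fun t => C * exp b * exp (a * t) := by
    funext t
    rw [exp_add]
    ring
  rw [hsplit, iteratedDeriv_const_mul_field, iteratedDeriv_cexp_const_mul, exp_add]
  ring

theorem iteratedDeriv_sq_add_shift_sq_eq_exp {k : ℕ} {w p q q' a₁ a₂ c₁ c₂ d d' : ℂ}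
    {L : ℂ → ℂ → ℂ} {χ : ℂ → ℂ} {f g : ℂ → ℂ → ℂ}
    (hform : p ^ 2 + 2 * w * p * q + q ^ 2 = 2) (hp : p ≠ 0)
    (hL : ∀ z₁ z₂, L z₁ z₂ = a₁ * z₁ + a₂ * z₂) (hχ : ∀ t, χ (t + c₂) = χ t)
    (hd : exp ((L c₁ c₂ + d - d') / 2) = (a₁ / 2) ^ k * (q' / p))
    (hf : ∀ z₁ z₂, f z₁ z₂ = q' / (Real.sqrt 2 : ℂ) * exp ((L z₁ z₂ + χ z₂ - L c₁ c₂ + d') / 2))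
    (hg : ∀ z₁ z₂, g z₁ z₂ = q / (Real.sqrt 2 : ℂ) * exp ((L z₁ z₂ + χ z₂ - L c₁ c₂ + d) / 2))
    (z₁ z₂ : ℂ) :
    (iteratedDeriv k (fun t => f t z₂) z₁) ^ 2
        + 2 * w * (iteratedDeriv k (fun t => f t z₂) z₁) * g (z₁ + c₁) (z₂ + c₂)
        + g (z₁ + c₁) (z₂ + c₂) ^ 2
      = exp (L z₁ z₂ + χ z₂ + d) := by
  obtain ⟨s, hs_def⟩ : ∃ s : ℂ, s = (Real.sqrt 2 : ℂ) := ⟨_, rfl⟩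
  obtain ⟨E, hE_def⟩ : ∃ E, E = exp ((L z₁ z₂ + χ z₂ + d) / 2) := ⟨_, rfl⟩
  rw [← hs_def] at hf hg
  have hs : s ^ 2 = 2 := by
    rw [hs_def, ← ofReal_pow, Real.sq_sqrt zero_le_two, ofReal_ofNat]
  have hs0 : s ≠ 0 := by rintro rfl; norm_num at hs
  have hsection : (fun t => f t z₂)
      = fun t => q' / s * exp (a₁ / 2 * t + (a₂ * z₂ + χ z₂ - L c₁ c₂ + d') / 2) := by
    funext t
    rw [hf, hL]
    ring_nf
  have hE : E = exp ((L c₁ c₂ + d - d') / 2)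
      * exp (a₁ / 2 * z₁ + (a₂ * z₂ + χ z₂ - L c₁ c₂ + d') / 2) := by
    rw [hE_def, ← exp_add, hL z₁]
    ring_nf
  have hcoeff : (a₁ / 2) ^ k * q' = exp ((L c₁ c₂ + d - d') / 2) * p := by
    rw [hd]; field_simp
  have hderiv : iteratedDeriv k (fun t => f t z₂) z₁ = p / s * E := by
    rw [hsection, iteratedDeriv_const_mul_cexp_mul_add, hE]
    linear_combination exp (a₁ / 2 * z₁ + (a₂ * z₂ + χ z₂ - L c₁ c₂ + d') / 2) / s * hcoeff
  have hshift : g (z₁ + c₁) (z₂ + c₂) = q / s * E := by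
    rw [hg, hχ, hE_def, hL, hL, hL]
    ring_nf
  have hEsq : exp (L z₁ z₂ + χ z₂ + d) = E ^ 2 := by
    rw [hE_def, ← exp_nat_mul]; push_cast; ring_nf
  rw [hderiv, hshift, hEsq]
  field_simp
  linear_combination E ^ 2 * hform - E ^ 2 * hs

theorem stmt_11_general (k : ℕ) (c₁ c₂ : ℂ) (w r₁ r₂ A₁ A₂ : ℂ)
    (hw2 : w ^ 2 ≠ 1)
    (hr₁ : r₁ ^ 2 = 1 + w) (hr₂ : r₂ ^ 2 = 1 - w)
    (hA₁ : A₁ = 1 / (2 * r₁) + 1 / (2 * Complex.I * r₂))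
    (hA₂ : A₂ = 1 / (2 * r₁) - 1 / (2 * Complex.I * r₂))
    (ξ₁ ξ₂ : ℂ) (hξ₁ : ξ₁ ≠ 0) (hξ₂ : ξ₂ ≠ 0)
    (hne₁ : A₁ * ξ₁ + A₂ * ξ₁⁻¹ ≠ 0) (hne₂ : A₁ * ξ₂ + A₂ * ξ₂⁻¹ ≠ 0)
    (a₁ a₂ : ℂ) (L : ℂ → ℂ → ℂ) (hL : ∀ z₁ z₂, L z₁ z₂ = a₁ * z₁ + a₂ * z₂)
    (χ : ℂ → ℂ) (hχ : ∀ t, χ (t + c₂) = χ t)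
    (d₁ d₂ : ℂ)
    (hd₁ : Complex.exp ((L c₁ c₂ + d₁ - d₂) / 2)
      = (a₁ / 2) ^ k * ((A₂ * ξ₂ + A₁ * ξ₂⁻¹) / (A₁ * ξ₁ + A₂ * ξ₁⁻¹)))
    (hd₂ : Complex.exp ((L c₁ c₂ + d₂ - d₁) / 2)
      = (a₁ / 2) ^ k * ((A₂ * ξ₁ + A₁ * ξ₁⁻¹) / (A₁ * ξ₂ + A₂ * ξ₂⁻¹)))
    (f g : ℂ → ℂ → ℂ)
    (hf : ∀ z₁ z₂, f z₁ z₂ = ((A₂ * ξ₂ + A₁ * ξ₂⁻¹) / (Real.sqrt 2 : ℂ))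
      * Complex.exp ((L z₁ z₂ + χ z₂ - L c₁ c₂ + d₂) / 2))
    (hg : ∀ z₁ z₂, g z₁ z₂ = ((A₂ * ξ₁ + A₁ * ξ₁⁻¹) / (Real.sqrt 2 : ℂ))
      * Complex.exp ((L z₁ z₂ + χ z₂ - L c₁ c₂ + d₁) / 2)) :
    ∀ z₁ z₂ : ℂ,
      (iteratedDeriv k (fun t => f t z₂) z₁) ^ 2
          + 2 * w * (iteratedDeriv k (fun t => f t z₂) z₁) * g (z₁ + c₁) (z₂ + c₂)
          + g (z₁ + c₁) (z₂ + c₂) ^ 2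
        = Complex.exp (L z₁ z₂ + χ z₂ + d₁) ∧
      (iteratedDeriv k (fun t => g t z₂) z₁) ^ 2
          + 2 * w * (iteratedDeriv k (fun t => g t z₂) z₁) * f (z₁ + c₁) (z₂ + c₂)
          + f (z₁ + c₁) (z₂ + c₂) ^ 2
        = Complex.exp (L z₁ z₂ + χ z₂ + d₂) := by
  have hw : 1 - w ^ 2 ≠ 0 := sub_ne_zero.mpr (Ne.symm hw2)
  have hw' : (1 + w) * (1 - w) ≠ 0 := by rwa [← sq_sub_sq, one_pow]
  have hu : 4 * (1 + w) * (1 / (2 * r₁)) ^ 2 = 1 :=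
    four_mul_mul_one_div_two_mul_sq hr₁ (left_ne_zero_of_mul hw')
  have hv : 4 * (1 - w) * (1 / (2 * I * r₂)) ^ 2 = -1 := by
    have hI : (1 / (2 * I * r₂)) ^ 2 = -(1 / (2 * r₂)) ^ 2 := by
      rw [div_pow, div_pow, mul_pow, mul_pow, I_sq]; ring
    rw [hI]
    linear_combination -four_mul_mul_one_div_two_mul_sq hr₂ (right_ne_zero_of_mul hw')
  obtain ⟨hsq, hmul⟩ := coeff_relations_of_four_mul_sq hu hv
  subst hA₁ hA₂
  intro z₁ z₂
  exact ⟨iteratedDeriv_sq_add_shift_sq_eq_exp (quadratic_form_eq_two hw hξ₁ hsq hmul) hne₁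
      hL hχ hd₁ hf hg z₁ z₂,
    iteratedDeriv_sq_add_shift_sq_eq_exp (quadratic_form_eq_two hw hξ₂ hsq hmul) hne₂
      hL hχ hd₂ hg hf z₁ z₂⟩

theorem stmt_11 (k : ℕ) (hk : 1 ≤ k) (c₁ c₂ : ℂ) (w r₁ r₂ A₁ A₂ : ℂ)
    (hw : w ≠ 0) (hw2 : w ^ 2 ≠ 1)
    (hr₁ : r₁ ^ 2 = 1 + w) (hr₂ : r₂ ^ 2 = 1 - w)
    (hA₁ : A₁ = 1 / (2 * r₁) + 1 / (2 * Complex.I * r₂))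
    (hA₂ : A₂ = 1 / (2 * r₁) - 1 / (2 * Complex.I * r₂))
    (ξ₁ ξ₂ : ℂ) (hξ₁ : ξ₁ ≠ 0) (hξ₂ : ξ₂ ≠ 0)
    (hne₁ : A₁ * ξ₁ + A₂ * ξ₁⁻¹ ≠ 0) (hne₂ : A₁ * ξ₂ + A₂ * ξ₂⁻¹ ≠ 0)
    (a₁ a₂ : ℂ) (L : ℂ → ℂ → ℂ) (hL : ∀ z₁ z₂, L z₁ z₂ = a₁ * z₁ + a₂ * z₂)
    (χ : ℂ → ℂ) (hχ : ∀ t, χ (t + c₂) = χ t)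
    (d₁ d₂ : ℂ)
    (hd₁ : Complex.exp ((L c₁ c₂ + d₁ - d₂) / 2)
      = (a₁ / 2) ^ k * ((A₂ * ξ₂ + A₁ * ξ₂⁻¹) / (A₁ * ξ₁ + A₂ * ξ₁⁻¹)))
    (hd₂ : Complex.exp ((L c₁ c₂ + d₂ - d₁) / 2)
      = (a₁ / 2) ^ k * ((A₂ * ξ₁ + A₁ * ξ₁⁻¹) / (A₁ * ξ₂ + A₂ * ξ₂⁻¹)))
    (f g : ℂ → ℂ → ℂ)
    (hf : ∀ z₁ z₂, f z₁ z₂ = ((A₂ * ξ₂ + A₁ * ξ₂⁻¹) / (Real.sqrt 2 : ℂ))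
      * Complex.exp ((L z₁ z₂ + χ z₂ - L c₁ c₂ + d₂) / 2))
    (hg : ∀ z₁ z₂, g z₁ z₂ = ((A₂ * ξ₁ + A₁ * ξ₁⁻¹) / (Real.sqrt 2 : ℂ))
      * Complex.exp ((L z₁ z₂ + χ z₂ - L c₁ c₂ + d₁) / 2)) :
    ∀ z₁ z₂ : ℂ,
      (iteratedDeriv k (fun t => f t z₂) z₁) ^ 2
          + 2 * w * (iteratedDeriv k (fun t => f t z₂) z₁) * g (z₁ + c₁) (z₂ + c₂)
          + g (z₁ + c₁) (z₂ + c₂) ^ 2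
        = Complex.exp (L z₁ z₂ + χ z₂ + d₁) ∧
      (iteratedDeriv k (fun t => g t z₂) z₁) ^ 2
          + 2 * w * (iteratedDeriv k (fun t => g t z₂) z₁) * f (z₁ + c₁) (z₂ + c₂)
          + f (z₁ + c₁) (z₂ + c₂) ^ 2
        = Complex.exp (L z₁ z₂ + χ z₂ + d₂) :=
  stmt_11_general k c₁ c₂ w r₁ r₂ A₁ A₂ hw2 hr₁ hr₂ hA₁ hA₂ ξ₁ ξ₂ hξ₁ hξ₂ hne₁ hne₂ a₁ a₂ L hL χ hχ
    d₁ d₂ hd₁ hd₂ f g hf hg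
end

section
/- Let k ≥ 1 be an integer, c = (c₁, c₂) ∈ ℂ², and let w ∈ ℂ with w ≠ 0 and w² ≠ 1; fix r₁, r₂ ∈ ℂ with r₁² = 1 + w, r₂² = 1 − w and set A₁ := 1/(2r₁) + 1/(2·i·r₂), A₂ := 1/(2r₁) − 1/(2·i·r₂). Let a₁, a₂, b₁, b₂ ∈ ℂ and set L₁(z₁, z₂) := a₁z₁ + a₂z₂, L₂(z₁, z₂) := b₁z₁ + b₂z₂; let Φ₁, Ψ₁ : ℂ → ℂ satisfy Φ₁(t + c₂) = Φ₁(t) and Ψ₁(t + c₂) = Ψ₁(t) for all t ∈ ℂ; and let d₁, d₂, d₃, d₄ ∈ ℂ satisfy exp(L₁(c) + d₁ − d₂) = a₁ᵏ, exp(L₁(c) + d₂ − d₁) = a₁ᵏ, exp(L₂(c) + d₃ − d₄) = b₁ᵏ and exp(L₂(c) + d₄ − d₃) = b₁ᵏ. Define f(z₁, z₂) := (A₂·exp(L₂(z) + Ψ₁(z₂) − L₂(c) + d₄) + A₁·exp(L₁(z) + Φ₁(z₂) − L₁(c) + d₂))/√2 and g(z₁, z₂) := (A₂·exp(L₁(z)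 + Φ₁(z₂) − L₁(c) + d₁) + A₁·exp(L₂(z) + Ψ₁(z₂) − L₂(c) + d₃))/√2. Then for all (z₁, z₂) ∈ ℂ²: (∂ᵏf/∂z₁ᵏ)(z)² + 2w·(∂ᵏf/∂z₁ᵏ)(z)·g(z₁ + c₁, z₂ + c₂) + g(z₁ + c₁, z₂ + c₂)² = exp(L₁(z) + L₂(z) + Φ₁(z₂) + Ψ₁(z₂) + d₁ + d₃) and (∂ᵏg/∂z₁ᵏ)(z)² + 2w·(∂ᵏg/∂z₁ᵏ)(z)·f(z₁ + c₁, z₂ + c₂) + f(z₁ + c₁, z₂ + c₂)² = exp(L₁(z) + L₂(z) + Φ₁(z₂) + Ψ₁(z₂) + d₂ + d₄). -/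
/-!
For fixed `z₂`, both `f(·, z₂)` and `g(·, z₂)` are combinations `(A₁ P + A₂ Q) / √2` of two
exponentials in `z₁`. Differentiating `k` times multiplies `P` and `Q` by `a₁ᵏ` and `b₁ᵏ`, and by
the relations between the `dᵢ` (together with the `c₂`-periodicity of `Φ₁`, `Ψ₁`) the shift by `c`
multiplies them by the same factors while interchanging `A₁` and `A₂`. The values of `r₁`, `r₂`
are chosen so that the form `x² + 2wxy + y²` maps `(A₁ p + A₂ q, A₂ p + A₁ q)` to `2 p q`.
-/

open Complex

def binaryQuad {R : Type*} [CommRing R] (w x y : R) : R := x ^ 2 + 2 * w * x * y + y ^ 2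

theorem binaryQuad_twist {R : Type*} [CommRing R] {w A₁ A₂ : R}
    (hA : A₁ ^ 2 + A₂ ^ 2 + 2 * w * (A₁ * A₂) = 0)
    (hA' : 2 * (A₁ * A₂) + w * (A₁ ^ 2 + A₂ ^ 2) = 1) (p q : R) :
    binaryQuad w (A₁ * p + A₂ * q) (A₂ * p + A₁ * q) = 2 * (p * q) := by
  unfold binaryQuad
  linear_combination (p ^ 2 + q ^ 2) * hA + 2 * (p * q) * hA'

theorem binaryQuad_twist_div {K : Type*} [Field K] [NeZero (2 : K)] {w A₁ A₂ s : K}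
    (hA : A₁ ^ 2 + A₂ ^ 2 + 2 * w * (A₁ * A₂) = 0)
    (hA' : 2 * (A₁ * A₂) + w * (A₁ ^ 2 + A₂ ^ 2) = 1) (hs : s ^ 2 = 2) (p q : K) :
    binaryQuad w ((A₁ * p + A₂ * q) / s) ((A₂ * p + A₁ * q) / s) = p * q := by
  have hdiv : ∀ x y : K, binaryQuad w (x / s) (y / s) = binaryQuad w x y / s ^ 2 := by
    intro x y; unfold binaryQuad; ring
  rw [hdiv, binaryQuad_twist hA hA', hs, mul_div_cancel_left₀ _ two_ne_zero]

theorem twist_coeff_relations {w r₁ r₂ A₁ A₂ : ℂ} (hw2 : w ^ 2 ≠ 1)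
    (hr₁ : r₁ ^ 2 = 1 + w) (hr₂ : r₂ ^ 2 = 1 - w)
    (hA₁ : A₁ = 1 / (2 * r₁) + 1 / (2 * I * r₂))
    (hA₂ : A₂ = 1 / (2 * r₁) - 1 / (2 * I * r₂)) :
    A₁ ^ 2 + A₂ ^ 2 + 2 * w * (A₁ * A₂) = 0 ∧ 2 * (A₁ * A₂) + w * (A₁ ^ 2 + A₂ ^ 2) = 1 := by
  have hr₁0 : r₁ ≠ 0 := by
    rintro rfl; exact hw2 (by linear_combination (1 - w) * hr₁)
  have hr₂0 : r₂ ≠ 0 := by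
    rintro rfl; exact hw2 (by linear_combination (1 + w) * hr₂)
  have hX : 4 * (1 / (2 * r₁)) ^ 2 * (1 + w) = 1 := by
    rw [← hr₁]; field_simp; ring
  have hY : 4 * (1 / (2 * I * r₂)) ^ 2 * (1 - w) = -1 := by
    rw [← hr₂]; field_simp; linear_combination 4 * I_sq
  subst hA₁ hA₂
  constructor
  · linear_combination hX / 2 + hY / 2
  · linear_combination hX / 2 - hY / 2

theorem iteratedDeriv_cexp_mul_add (n : ℕ) (a C : ℂ) :
    iteratedDeriv n (fun t => exp (a * t + C)) = fun t => a ^ n * exp (a * t + C) := by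
  funext t
  simp only [exp_add, iteratedDeriv_mul_const_field, iteratedDeriv_cexp_const_mul, mul_assoc]

theorem iteratedDeriv_linComb_cexp (n : ℕ) (u v a b C D s z : ℂ) :
    iteratedDeriv n (fun t => (u * exp (a * t + C) + v * exp (b * t + D)) / s) z
      = (u * (a ^ n * exp (a * z + C)) + v * (b ^ n * exp (b * z + D))) / s := by
  rw [iteratedDeriv_div_const, iteratedDeriv_fun_add (by fun_prop) (by fun_prop),
    iteratedDeriv_const_mul_field, iteratedDeriv_const_mul_field,
    iteratedDeriv_cexp_mul_add, iteratedDeriv_cexp_mul_add]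

theorem binaryQuad_iteratedDeriv_shift_eq (k : ℕ) {c₁ c₂ w A₁ A₂ s : ℂ}
    (hA : A₁ ^ 2 + A₂ ^ 2 + 2 * w * (A₁ * A₂) = 0)
    (hA' : 2 * (A₁ * A₂) + w * (A₁ ^ 2 + A₂ ^ 2) = 1) (hs : s ^ 2 = 2)
    {a₁ a₂ b₁ b₂ : ℂ} {L₁ L₂ : ℂ → ℂ → ℂ}
    (hL₁ : ∀ z₁ z₂, L₁ z₁ z₂ = a₁ * z₁ + a₂ * z₂)
    (hL₂ : ∀ z₁ z₂, L₂ z₁ z₂ = b₁ * z₁ + b₂ * z₂)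
    {Φ₁ Ψ₁ : ℂ → ℂ} (hΦ₁ : ∀ t, Φ₁ (t + c₂) = Φ₁ t) (hΨ₁ : ∀ t, Ψ₁ (t + c₂) = Ψ₁ t)
    {d₁ d₂ d₃ d₄ : ℂ}
    (h₁ : exp (L₁ c₁ c₂ + d₁ - d₂) = a₁ ^ k)
    (h₃ : exp (L₂ c₁ c₂ + d₃ - d₄) = b₁ ^ k)
    {f g : ℂ → ℂ → ℂ}
    (hf : ∀ z₁ z₂, f z₁ z₂ = (A₂ * exp (L₂ z₁ z₂ + Ψ₁ z₂ - L₂ c₁ c₂ + d₄)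
      + A₁ * exp (L₁ z₁ z₂ + Φ₁ z₂ - L₁ c₁ c₂ + d₂)) / s)
    (hg : ∀ z₁ z₂, g z₁ z₂ = (A₂ * exp (L₁ z₁ z₂ + Φ₁ z₂ - L₁ c₁ c₂ + d₁)
      + A₁ * exp (L₂ z₁ z₂ + Ψ₁ z₂ - L₂ c₁ c₂ + d₃)) / s) (z₁ z₂ : ℂ) :
    binaryQuad w (iteratedDeriv k (fun t => f t z₂) z₁) (g (z₁ + c₁) (z₂ + c₂))
      = exp (L₁ z₁ z₂ + L₂ z₁ z₂ + Φ₁ z₂ + Ψ₁ z₂ + d₁ + d₃) := by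
  have hfun : (fun t => f t z₂) = fun t => (A₁ * exp (a₁ * t + (a₂ * z₂ + Φ₁ z₂ - L₁ c₁ c₂ + d₂))
      + A₂ * exp (b₁ * t + (b₂ * z₂ + Ψ₁ z₂ - L₂ c₁ c₂ + d₄))) / s := by
    funext t
    rw [hf, hL₁, hL₂, add_comm (A₂ * _)]
    ring_nf
  have hP : a₁ ^ k * exp (a₁ * z₁ + (a₂ * z₂ + Φ₁ z₂ - L₁ c₁ c₂ + d₂))
      = exp (L₁ z₁ z₂ + Φ₁ z₂ + d₁) := by
    rw [← h₁, ← exp_add, hL₁ z₁]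
    ring_nf
  have hQ : b₁ ^ k * exp (b₁ * z₁ + (b₂ * z₂ + Ψ₁ z₂ - L₂ c₁ c₂ + d₄))
      = exp (L₂ z₁ z₂ + Ψ₁ z₂ + d₃) := by
    rw [← h₃, ← exp_add, hL₂ z₁]
    ring_nf
  have hshift : g (z₁ + c₁) (z₂ + c₂)
      = (A₂ * exp (L₁ z₁ z₂ + Φ₁ z₂ + d₁) + A₁ * exp (L₂ z₁ z₂ + Ψ₁ z₂ + d₃)) / s := by
    simp only [hg, hΦ₁, hΨ₁, hL₁, hL₂]
    ring_nf
  rw [hfun, iteratedDeriv_linComb_cexp, hP, hQ, hshift, binaryQuad_twist_div hA hA' hs, ← exp_add]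
  ring_nf

theorem stmt_12_general (k : ℕ) (c₁ c₂ : ℂ) (w r₁ r₂ A₁ A₂ : ℂ)
    (hw2 : w ^ 2 ≠ 1)
    (hr₁ : r₁ ^ 2 = 1 + w) (hr₂ : r₂ ^ 2 = 1 - w)
    (hA₁ : A₁ = 1 / (2 * r₁) + 1 / (2 * Complex.I * r₂))
    (hA₂ : A₂ = 1 / (2 * r₁) - 1 / (2 * Complex.I * r₂))
    (a₁ a₂ b₁ b₂ : ℂ) (L₁ L₂ : ℂ → ℂ → ℂ)
    (hL₁ : ∀ z₁ z₂, L₁ z₁ z₂ = a₁ * z₁ + a₂ * z₂)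
    (hL₂ : ∀ z₁ z₂, L₂ z₁ z₂ = b₁ * z₁ + b₂ * z₂)
    (Φ₁ Ψ₁ : ℂ → ℂ) (hΦ₁ : ∀ t, Φ₁ (t + c₂) = Φ₁ t) (hΨ₁ : ∀ t, Ψ₁ (t + c₂) = Ψ₁ t)
    (d₁ d₂ d₃ d₄ : ℂ)
    (h₁ : Complex.exp (L₁ c₁ c₂ + d₁ - d₂) = a₁ ^ k)
    (h₂ : Complex.exp (L₁ c₁ c₂ + d₂ - d₁) = a₁ ^ k)
    (h₃ : Complex.exp (L₂ c₁ c₂ + d₃ - d₄) = b₁ ^ k)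
    (h₄ : Complex.exp (L₂ c₁ c₂ + d₄ - d₃) = b₁ ^ k)
    (f g : ℂ → ℂ → ℂ)
    (hf : ∀ z₁ z₂, f z₁ z₂ = (A₂ * Complex.exp (L₂ z₁ z₂ + Ψ₁ z₂ - L₂ c₁ c₂ + d₄)
      + A₁ * Complex.exp (L₁ z₁ z₂ + Φ₁ z₂ - L₁ c₁ c₂ + d₂)) / (Real.sqrt 2 : ℂ))
    (hg : ∀ z₁ z₂, g z₁ z₂ = (A₂ * Complex.exp (L₁ z₁ z₂ + Φ₁ z₂ - L₁ c₁ c₂ + d₁)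
      + A₁ * Complex.exp (L₂ z₁ z₂ + Ψ₁ z₂ - L₂ c₁ c₂ + d₃)) / (Real.sqrt 2 : ℂ)) :
    ∀ z₁ z₂ : ℂ,
      (iteratedDeriv k (fun t => f t z₂) z₁) ^ 2
          + 2 * w * (iteratedDeriv k (fun t => f t z₂) z₁) * g (z₁ + c₁) (z₂ + c₂)
          + g (z₁ + c₁) (z₂ + c₂) ^ 2
        = Complex.exp (L₁ z₁ z₂ + L₂ z₁ z₂ + Φ₁ z₂ + Ψ₁ z₂ + d₁ + d₃) ∧
      (iteratedDeriv k (fun t => g t z₂) z₁) ^ 2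
          + 2 * w * (iteratedDeriv k (fun t => g t z₂) z₁) * f (z₁ + c₁) (z₂ + c₂)
          + f (z₁ + c₁) (z₂ + c₂) ^ 2
        = Complex.exp (L₁ z₁ z₂ + L₂ z₁ z₂ + Φ₁ z₂ + Ψ₁ z₂ + d₂ + d₄) := by
  intro z₁ z₂
  obtain ⟨hA, hA'⟩ := twist_coeff_relations hw2 hr₁ hr₂ hA₁ hA₂
  have hs : (Real.sqrt 2 : ℂ) ^ 2 = 2 := by
    rw [← ofReal_pow, Real.sq_sqrt zero_le_two, ofReal_ofNat]
  refine ⟨binaryQuad_iteratedDeriv_shift_eq k hA hA' hs hL₁ hL₂ hΦ₁ hΨ₁ h₁ h₃ hf hg z₁ z₂, ?_⟩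
  -- the system is invariant under (f, L₁, Φ₁, d₁, d₂) ↔ (g, L₂, Ψ₁, d₄, d₃)
  rw [show L₁ z₁ z₂ + L₂ z₁ z₂ + Φ₁ z₂ + Ψ₁ z₂ + d₂ + d₄
      = L₂ z₁ z₂ + L₁ z₁ z₂ + Ψ₁ z₂ + Φ₁ z₂ + d₄ + d₂ by ring]
  exact binaryQuad_iteratedDeriv_shift_eq k hA hA' hs hL₂ hL₁ hΨ₁ hΦ₁ h₄ h₂ hg hf z₁ z₂

theorem stmt_12 (k : ℕ) (hk : 1 ≤ k) (c₁ c₂ : ℂ) (w r₁ r₂ A₁ A₂ : ℂ)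
    (hw : w ≠ 0) (hw2 : w ^ 2 ≠ 1)
    (hr₁ : r₁ ^ 2 = 1 + w) (hr₂ : r₂ ^ 2 = 1 - w)
    (hA₁ : A₁ = 1 / (2 * r₁) + 1 / (2 * Complex.I * r₂))
    (hA₂ : A₂ = 1 / (2 * r₁) - 1 / (2 * Complex.I * r₂))
    (a₁ a₂ b₁ b₂ : ℂ) (L₁ L₂ : ℂ → ℂ → ℂ)
    (hL₁ : ∀ z₁ z₂, L₁ z₁ z₂ = a₁ * z₁ + a₂ * z₂)
    (hL₂ : ∀ z₁ z₂, L₂ z₁ z₂ = b₁ * z₁ + b₂ * z₂)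
    (Φ₁ Ψ₁ : ℂ → ℂ) (hΦ₁ : ∀ t, Φ₁ (t + c₂) = Φ₁ t) (hΨ₁ : ∀ t, Ψ₁ (t + c₂) = Ψ₁ t)
    (d₁ d₂ d₃ d₄ : ℂ)
    (h₁ : Complex.exp (L₁ c₁ c₂ + d₁ - d₂) = a₁ ^ k)
    (h₂ : Complex.exp (L₁ c₁ c₂ + d₂ - d₁) = a₁ ^ k)
    (h₃ : Complex.exp (L₂ c₁ c₂ + d₃ - d₄) = b₁ ^ k)
    (h₄ : Complex.exp (L₂ c₁ c₂ + d₄ - d₃) = b₁ ^ k)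
    (f g : ℂ → ℂ → ℂ)
    (hf : ∀ z₁ z₂, f z₁ z₂ = (A₂ * Complex.exp (L₂ z₁ z₂ + Ψ₁ z₂ - L₂ c₁ c₂ + d₄)
      + A₁ * Complex.exp (L₁ z₁ z₂ + Φ₁ z₂ - L₁ c₁ c₂ + d₂)) / (Real.sqrt 2 : ℂ))
    (hg : ∀ z₁ z₂, g z₁ z₂ = (A₂ * Complex.exp (L₁ z₁ z₂ + Φ₁ z₂ - L₁ c₁ c₂ + d₁)
      + A₁ * Complex.exp (L₂ z₁ z₂ + Ψ₁ z₂ - L₂ c₁ c₂ + d₃)) / (Real.sqrt 2 : ℂ)) :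
    ∀ z₁ z₂ : ℂ,
      (iteratedDeriv k (fun t => f t z₂) z₁) ^ 2
          + 2 * w * (iteratedDeriv k (fun t => f t z₂) z₁) * g (z₁ + c₁) (z₂ + c₂)
          + g (z₁ + c₁) (z₂ + c₂) ^ 2
        = Complex.exp (L₁ z₁ z₂ + L₂ z₁ z₂ + Φ₁ z₂ + Ψ₁ z₂ + d₁ + d₃) ∧
      (iteratedDeriv k (fun t => g t z₂) z₁) ^ 2
          + 2 * w * (iteratedDeriv k (fun t => g t z₂) z₁) * f (z₁ + c₁) (z₂ + c₂)
          + f (z₁ + c₁) (z₂ + c₂) ^ 2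
        = Complex.exp (L₁ z₁ z₂ + L₂ z₁ z₂ + Φ₁ z₂ + Ψ₁ z₂ + d₂ + d₄) :=
  stmt_12_general k c₁ c₂ w r₁ r₂ A₁ A₂ hw2 hr₁ hr₂ hA₁ hA₂ a₁ a₂ b₁ b₂ L₁ L₂ hL₁ hL₂ Φ₁ Ψ₁ hΦ₁ hΨ₁
    d₁ d₂ d₃ d₄ h₁ h₂ h₃ h₄ f g hf hg
end

section
/- Let k ≥ 1 be an integer, c = (c₁, c₂) ∈ ℂ², and let w ∈ ℂ with w ≠ 0 and w² ≠ 1; fix r₁, r₂ ∈ ℂ with r₁² = 1 + w, r₂² = 1 − w and set A₁ := 1/(2r₁) + 1/(2·i·r₂), A₂ := 1/(2r₁) − 1/(2·i·r₂). Let a₁, a₂, b₁, b₂ ∈ ℂ and set L₁(z₁, z₂) := a₁z₁ + a₂z₂, L₂(z₁, z₂) := b₁z₁ + b₂z₂; let Φ₁, Ψ₁ : ℂ → ℂ satisfy Φ₁(t + c₂) = Φ₁(t) and Ψ₁(t + c₂) = Ψ₁(t) for all t ∈ ℂ; and let d₁, d₂, d₃, d₄ ∈ ℂ satisfy A₁·exp(L₁(c)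 + d₁ − d₂) = A₂·a₁ᵏ, A₁·exp(L₁(c) + d₂ − d₁) = A₂·a₁ᵏ, A₂·exp(L₂(c) + d₃ − d₄) = A₁·b₁ᵏ and A₂·exp(L₂(c) + d₄ − d₃) = A₁·b₁ᵏ. Define f(z₁, z₂) := (A₂·exp(L₁(z) + Φ₁(z₂) − L₁(c) + d₂) + A₁·exp(L₂(z) + Ψ₁(z₂) − L₂(c) + d₄))/√2 and g(z₁, z₂) := (A₂·exp(L₁(z) + Φ₁(z₂) − L₁(c) + d₁) + A₁·exp(L₂(z) + Ψ₁(z₂) − L₂(c) + d₃))/√2. Then for all (z₁, z₂) ∈ ℂ²: (∂ᵏf/∂z₁ᵏ)(z)² + 2w·(∂ᵏf/∂z₁ᵏ)(z)·g(z₁ + c₁, z₂ + c₂) + g(z₁ + c₁, z₂ + c₂)² = exp(L₁(z) + L₂(z) + Φ₁(z₂) + Ψ₁(z₂) + d₁ + d₃) and (∂ᵏg/∂z₁ᵏ)(z)² + 2w·(∂ᵏg/∂z₁ᵏ)(z)·f(z₁ + c₁, z₂ + c₂) + f(z₁ + c₁, z₂ + c₂)² = exp(L₁(z) + L₂(z)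 + Φ₁(z₂) + Ψ₁(z₂) + d₂ + d₄). -/
/-!
Put X = exp (L₁ z + Φ₁ z₂ + d₁) and Y = exp (L₂ z + Ψ₁ z₂ + d₃). Differentiating k times in z₁
multiplies the two exponentials in f by a₁ᵏ and b₁ᵏ, and the relations between the dᵢ turn
∂ᵏf/∂z₁ᵏ into (A₁X + A₂Y)/√2, while linearity of L₁, L₂ and c₂-periodicity of Φ₁, Ψ₁ give
g(z + c) = (A₂X + A₁Y)/√2. The choice of A₁, A₂ makes P² + 2wPQ + Q² equal to 2XY at
P = A₁X + A₂Y, Q = A₂X + A₁Y, and dividing by (√2)² leaves XY.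
-/

open Complex

theorem iteratedDeriv_cexp_affine {ℓ : ℂ → ℂ} {a b : ℂ} (hℓ : ∀ t, ℓ t = a * t + b) (n : ℕ)
    (z : ℂ) : iteratedDeriv n (fun t => exp (ℓ t)) z = a ^ n * exp (ℓ z) := by
  have hsplit : (fun t => exp (ℓ t)) = fun t => exp b * exp (a * t) :=
    funext fun t => by rw [hℓ, exp_add, mul_comm]
  rw [hsplit, iteratedDeriv_const_mul_field, iteratedDeriv_cexp_const_mul, hℓ, exp_add]
  ring

theorem iteratedDeriv_cexp_affine_combination {ℓ₁ ℓ₂ : ℂ → ℂ} {a b α β : ℂ}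
    (hℓ₁ : ∀ t, ℓ₁ t = a * t + α) (hℓ₂ : ∀ t, ℓ₂ t = b * t + β) (p q s : ℂ) (n : ℕ) (z : ℂ) :
    iteratedDeriv n (fun t => (p * exp (ℓ₁ t) + q * exp (ℓ₂ t)) / s) z
      = (p * a ^ n * exp (ℓ₁ z) + q * b ^ n * exp (ℓ₂ z)) / s := by
  have hℓ₁' : ℓ₁ = fun t => a * t + α := funext hℓ₁
  have hℓ₂' : ℓ₂ = fun t => b * t + β := funext hℓ₂
  have hsmooth₁ : ContDiffAt ℂ n (fun t => p * exp (ℓ₁ t)) z := by rw [hℓ₁']; fun_prop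
  have hsmooth₂ : ContDiffAt ℂ n (fun t => q * exp (ℓ₂ t)) z := by rw [hℓ₂']; fun_prop
  rw [iteratedDeriv_div_const, iteratedDeriv_fun_add hsmooth₁ hsmooth₂,
    iteratedDeriv_const_mul_field, iteratedDeriv_const_mul_field,
    iteratedDeriv_cexp_affine hℓ₁, iteratedDeriv_cexp_affine hℓ₂]
  ring

theorem mul_cexp_shift {A B e d d' : ℂ} (h : A * exp (e + d - d') = B) (x : ℂ) :
    B * exp (x - e + d') = A * exp (x + d) := by
  rw [← h, mul_assoc, ← exp_add]
  ring_nf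

theorem quadratic_form_swap_combination {w r₁ r₂ A₁ A₂ : ℂ} (hw2 : w ^ 2 ≠ 1)
    (hr₁ : r₁ ^ 2 = 1 + w) (hr₂ : r₂ ^ 2 = 1 - w)
    (hA₁ : A₁ = 1 / (2 * r₁) + 1 / (2 * I * r₂))
    (hA₂ : A₂ = 1 / (2 * r₁) - 1 / (2 * I * r₂)) (X Y : ℂ) :
    (A₁ * X + A₂ * Y) ^ 2 + 2 * w * (A₁ * X + A₂ * Y) * (A₂ * X + A₁ * Y)
      + (A₂ * X + A₁ * Y) ^ 2 = 2 * X * Y := by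
  have hr₁0 : r₁ ≠ 0 := by
    rintro rfl
    exact hw2 (by linear_combination (1 - w) * hr₁)
  have hr₂0 : r₂ ≠ 0 := by
    rintro rfl
    exact hw2 (by linear_combination (1 + w) * hr₂)
  -- with A₁ = u + v, A₂ = u - v, the identity is linear in these two facts
  have hu : (1 / (2 * r₁)) ^ 2 * (1 + w) = 1 / 4 := by
    rw [← hr₁]; field_simp; ring
  have hv : (1 / (2 * I * r₂)) ^ 2 * (1 - w) = -1 / 4 := by
    rw [← hr₂]; field_simp; rw [I_sq]; ring
  subst hA₁ hA₂
  linear_combination (2 * (X ^ 2 + Y ^ 2) + 4 * X * Y) * hu + (2 * (X ^ 2 + Y ^ 2) - 4 * X * Y) * hv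

theorem iteratedDeriv_quadratic_shift_eq {k : ℕ} {c₁ c₂ w A₁ A₂ a₁ a₂ b₁ b₂ d₁ d₂ d₃ d₄ : ℂ}
    {L₁ L₂ : ℂ → ℂ → ℂ} {Φ Ψ : ℂ → ℂ} {f g : ℂ → ℂ → ℂ}
    (hQ : ∀ X Y, (A₁ * X + A₂ * Y) ^ 2 + 2 * w * (A₁ * X + A₂ * Y) * (A₂ * X + A₁ * Y)
      + (A₂ * X + A₁ * Y) ^ 2 = 2 * X * Y)
    (hL₁ : ∀ z₁ z₂, L₁ z₁ z₂ = a₁ * z₁ + a₂ * z₂) (hL₂ : ∀ z₁ z₂, L₂ z₁ z₂ = b₁ * z₁ + b₂ * z₂)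
    (hΦ : ∀ t, Φ (t + c₂) = Φ t) (hΨ : ∀ t, Ψ (t + c₂) = Ψ t)
    (h₁ : A₁ * exp (L₁ c₁ c₂ + d₁ - d₂) = A₂ * a₁ ^ k)
    (h₃ : A₂ * exp (L₂ c₁ c₂ + d₃ - d₄) = A₁ * b₁ ^ k)
    (hf : ∀ z₁ z₂, f z₁ z₂ = (A₂ * exp (L₁ z₁ z₂ + Φ z₂ - L₁ c₁ c₂ + d₂)
      + A₁ * exp (L₂ z₁ z₂ + Ψ z₂ - L₂ c₁ c₂ + d₄)) / (Real.sqrt 2 : ℂ))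
    (hg : ∀ z₁ z₂, g z₁ z₂ = (A₂ * exp (L₁ z₁ z₂ + Φ z₂ - L₁ c₁ c₂ + d₁)
      + A₁ * exp (L₂ z₁ z₂ + Ψ z₂ - L₂ c₁ c₂ + d₃)) / (Real.sqrt 2 : ℂ)) (z₁ z₂ : ℂ) :
    iteratedDeriv k (fun t => f t z₂) z₁ ^ 2
        + 2 * w * iteratedDeriv k (fun t => f t z₂) z₁ * g (z₁ + c₁) (z₂ + c₂)
        + g (z₁ + c₁) (z₂ + c₂) ^ 2
      = exp (L₁ z₁ z₂ + L₂ z₁ z₂ + Φ z₂ + Ψ z₂ + d₁ + d₃) := by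
  set X := exp (L₁ z₁ z₂ + Φ z₂ + d₁)
  set Y := exp (L₂ z₁ z₂ + Ψ z₂ + d₃)
  set s : ℂ := (Real.sqrt 2 : ℂ)
  have hderiv : iteratedDeriv k (fun t => f t z₂) z₁ = (A₁ * X + A₂ * Y) / s := by
    rw [show (fun t => f t z₂) = _ from funext fun t => hf t z₂,
      iteratedDeriv_cexp_affine_combination (a := a₁) (b := b₁)
        (α := a₂ * z₂ + Φ z₂ - L₁ c₁ c₂ + d₂) (β := b₂ * z₂ + Ψ z₂ - L₂ c₁ c₂ + d₄)
        (fun t => by rw [hL₁]; ring) (fun t => by rw [hL₂]; ring),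
      mul_cexp_shift h₁, mul_cexp_shift h₃]
  have hshift : g (z₁ + c₁) (z₂ + c₂) = (A₂ * X + A₁ * Y) / s := by
    have e₁ : L₁ (z₁ + c₁) (z₂ + c₂) + Φ (z₂ + c₂) - L₁ c₁ c₂ + d₁ = L₁ z₁ z₂ + Φ z₂ + d₁ := by
      simp only [hL₁, hΦ]; ring
    have e₂ : L₂ (z₁ + c₁) (z₂ + c₂) + Ψ (z₂ + c₂) - L₂ c₁ c₂ + d₃ = L₂ z₁ z₂ + Ψ z₂ + d₃ := by
      simp only [hL₂, hΨ]; ring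
    rw [hg, e₁, e₂]
  have hXY : X * Y = exp (L₁ z₁ z₂ + L₂ z₁ z₂ + Φ z₂ + Ψ z₂ + d₁ + d₃) := by
    rw [← exp_add]; ring_nf
  have hs : s ^ 2 = 2 := by
    rw [← ofReal_pow, Real.sq_sqrt zero_le_two, ofReal_ofNat]
  rw [hderiv, hshift, ← hXY]
  calc ((A₁ * X + A₂ * Y) / s) ^ 2 + 2 * w * ((A₁ * X + A₂ * Y) / s) * ((A₂ * X + A₁ * Y) / s)
        + ((A₂ * X + A₁ * Y) / s) ^ 2
      = ((A₁ * X + A₂ * Y) ^ 2 + 2 * w * (A₁ * X + A₂ * Y) * (A₂ * X + A₁ * Y)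
        + (A₂ * X + A₁ * Y) ^ 2) / s ^ 2 := by ring
    _ = X * Y := by rw [hQ, hs]; ring

theorem stmt_13_general (k : ℕ) (c₁ c₂ : ℂ) (w r₁ r₂ A₁ A₂ : ℂ)
    (hw2 : w ^ 2 ≠ 1)
    (hr₁ : r₁ ^ 2 = 1 + w) (hr₂ : r₂ ^ 2 = 1 - w)
    (hA₁ : A₁ = 1 / (2 * r₁) + 1 / (2 * Complex.I * r₂))
    (hA₂ : A₂ = 1 / (2 * r₁) - 1 / (2 * Complex.I * r₂))
    (a₁ a₂ b₁ b₂ : ℂ) (L₁ L₂ : ℂ → ℂ → ℂ)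
    (hL₁ : ∀ z₁ z₂, L₁ z₁ z₂ = a₁ * z₁ + a₂ * z₂)
    (hL₂ : ∀ z₁ z₂, L₂ z₁ z₂ = b₁ * z₁ + b₂ * z₂)
    (Φ₁ Ψ₁ : ℂ → ℂ) (hΦ₁ : ∀ t, Φ₁ (t + c₂) = Φ₁ t) (hΨ₁ : ∀ t, Ψ₁ (t + c₂) = Ψ₁ t)
    (d₁ d₂ d₃ d₄ : ℂ)
    (h₁ : A₁ * Complex.exp (L₁ c₁ c₂ + d₁ - d₂) = A₂ * a₁ ^ k)
    (h₂ : A₁ * Complex.exp (L₁ c₁ c₂ + d₂ - d₁) = A₂ * a₁ ^ k)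
    (h₃ : A₂ * Complex.exp (L₂ c₁ c₂ + d₃ - d₄) = A₁ * b₁ ^ k)
    (h₄ : A₂ * Complex.exp (L₂ c₁ c₂ + d₄ - d₃) = A₁ * b₁ ^ k)
    (f g : ℂ → ℂ → ℂ)
    (hf : ∀ z₁ z₂, f z₁ z₂ = (A₂ * Complex.exp (L₁ z₁ z₂ + Φ₁ z₂ - L₁ c₁ c₂ + d₂)
      + A₁ * Complex.exp (L₂ z₁ z₂ + Ψ₁ z₂ - L₂ c₁ c₂ + d₄)) / (Real.sqrt 2 : ℂ))
    (hg : ∀ z₁ z₂, g z₁ z₂ = (A₂ * Complex.exp (L₁ z₁ z₂ + Φ₁ z₂ - L₁ c₁ c₂ + d₁)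
      + A₁ * Complex.exp (L₂ z₁ z₂ + Ψ₁ z₂ - L₂ c₁ c₂ + d₃)) / (Real.sqrt 2 : ℂ)) :
    ∀ z₁ z₂ : ℂ,
      (iteratedDeriv k (fun t => f t z₂) z₁) ^ 2
          + 2 * w * (iteratedDeriv k (fun t => f t z₂) z₁) * g (z₁ + c₁) (z₂ + c₂)
          + g (z₁ + c₁) (z₂ + c₂) ^ 2
        = Complex.exp (L₁ z₁ z₂ + L₂ z₁ z₂ + Φ₁ z₂ + Ψ₁ z₂ + d₁ + d₃) ∧
      (iteratedDeriv k (fun t => g t z₂) z₁) ^ 2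
          + 2 * w * (iteratedDeriv k (fun t => g t z₂) z₁) * f (z₁ + c₁) (z₂ + c₂)
          + f (z₁ + c₁) (z₂ + c₂) ^ 2
        = Complex.exp (L₁ z₁ z₂ + L₂ z₁ z₂ + Φ₁ z₂ + Ψ₁ z₂ + d₂ + d₄) := by
  have hQ := quadratic_form_swap_combination hw2 hr₁ hr₂ hA₁ hA₂
  intro z₁ z₂
  -- the second equation is the first one with the roles of (f, d₁, d₃) and (g, d₂, d₄) exchanged
  exact ⟨iteratedDeriv_quadratic_shift_eq hQ hL₁ hL₂ hΦ₁ hΨ₁ h₁ h₃ hf hg z₁ z₂,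
    iteratedDeriv_quadratic_shift_eq hQ hL₁ hL₂ hΦ₁ hΨ₁ h₂ h₄ hg hf z₁ z₂⟩

theorem stmt_13 (k : ℕ) (hk : 1 ≤ k) (c₁ c₂ : ℂ) (w r₁ r₂ A₁ A₂ : ℂ)
    (hw : w ≠ 0) (hw2 : w ^ 2 ≠ 1)
    (hr₁ : r₁ ^ 2 = 1 + w) (hr₂ : r₂ ^ 2 = 1 - w)
    (hA₁ : A₁ = 1 / (2 * r₁) + 1 / (2 * Complex.I * r₂))
    (hA₂ : A₂ = 1 / (2 * r₁) - 1 / (2 * Complex.I * r₂))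
    (a₁ a₂ b₁ b₂ : ℂ) (L₁ L₂ : ℂ → ℂ → ℂ)
    (hL₁ : ∀ z₁ z₂, L₁ z₁ z₂ = a₁ * z₁ + a₂ * z₂)
    (hL₂ : ∀ z₁ z₂, L₂ z₁ z₂ = b₁ * z₁ + b₂ * z₂)
    (Φ₁ Ψ₁ : ℂ → ℂ) (hΦ₁ : ∀ t, Φ₁ (t + c₂) = Φ₁ t) (hΨ₁ : ∀ t, Ψ₁ (t + c₂) = Ψ₁ t)
    (d₁ d₂ d₃ d₄ : ℂ)
    (h₁ : A₁ * Complex.exp (L₁ c₁ c₂ + d₁ - d₂) = A₂ * a₁ ^ k)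
    (h₂ : A₁ * Complex.exp (L₁ c₁ c₂ + d₂ - d₁) = A₂ * a₁ ^ k)
    (h₃ : A₂ * Complex.exp (L₂ c₁ c₂ + d₃ - d₄) = A₁ * b₁ ^ k)
    (h₄ : A₂ * Complex.exp (L₂ c₁ c₂ + d₄ - d₃) = A₁ * b₁ ^ k)
    (f g : ℂ → ℂ → ℂ)
    (hf : ∀ z₁ z₂, f z₁ z₂ = (A₂ * Complex.exp (L₁ z₁ z₂ + Φ₁ z₂ - L₁ c₁ c₂ + d₂)
      + A₁ * Complex.exp (L₂ z₁ z₂ + Ψ₁ z₂ - L₂ c₁ c₂ + d₄)) / (Real.sqrt 2 : ℂ))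
    (hg : ∀ z₁ z₂, g z₁ z₂ = (A₂ * Complex.exp (L₁ z₁ z₂ + Φ₁ z₂ - L₁ c₁ c₂ + d₁)
      + A₁ * Complex.exp (L₂ z₁ z₂ + Ψ₁ z₂ - L₂ c₁ c₂ + d₃)) / (Real.sqrt 2 : ℂ)) :
    ∀ z₁ z₂ : ℂ,
      (iteratedDeriv k (fun t => f t z₂) z₁) ^ 2
          + 2 * w * (iteratedDeriv k (fun t => f t z₂) z₁) * g (z₁ + c₁) (z₂ + c₂)
          + g (z₁ + c₁) (z₂ + c₂) ^ 2
        = Complex.exp (L₁ z₁ z₂ + L₂ z₁ z₂ + Φ₁ z₂ + Ψ₁ z₂ + d₁ + d₃) ∧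
      (iteratedDeriv k (fun t => g t z₂) z₁) ^ 2
          + 2 * w * (iteratedDeriv k (fun t => g t z₂) z₁) * f (z₁ + c₁) (z₂ + c₂)
          + f (z₁ + c₁) (z₂ + c₂) ^ 2
        = Complex.exp (L₁ z₁ z₂ + L₂ z₁ z₂ + Φ₁ z₂ + Ψ₁ z₂ + d₂ + d₄) :=
  stmt_13_general k c₁ c₂ w r₁ r₂ A₁ A₂ hw2 hr₁ hr₂ hA₁ hA₂ a₁ a₂ b₁ b₂ L₁ L₂ hL₁ hL₂ Φ₁ Ψ₁ hΦ₁ hΨ₁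
    d₁ d₂ d₃ d₄ h₁ h₂ h₃ h₄ f g hf hg
end

section
/- Let d₁, d₂, d₃, d₄ ∈ ℂ satisfy exp(d₁) = exp(d₂) and exp(d₃) = exp(d₄), and set c₁ := 8πi/3, c₂ := −2πi/3. Define f, g : ℂ² → ℂ by f(z₁, z₂) := (1/(6√2))·(−(3 − √3)·exp(z₁ + z₂ + d₂) + (3 + √3)·exp(z₁ − 2z₂ + d₄)) and g(z₁, z₂) := (1/(6√2))·((3 + √3)·exp(z₁ + z₂ + d₁) − (3 − √3)·exp(z₁ − 2z₂ + d₃)). Then for all (z₁, z₂) ∈ ℂ²: (∂f/∂z₁)(z₁, z₂)² + 4·(∂f/∂z₁)(z₁, z₂)·g(z₁ + c₁, z₂ + c₂) + g(z₁ + c₁, z₂ + c₂)² = exp(2z₁ − z₂ + d₁ + d₃) and (∂g/∂z₁)(z₁, z₂)² + 4·(∂g/∂z₁)(z₁, z₂)·f(z₁ + c₁, z₂ + c₂) + f(z₁ + c₁, z₂ + c₂)² = exp(2z₁ − z₂ + d₂ + d₄). -/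
/-! Write `u = exp (z₁ + z₂ + d₂)` and `v = exp (z₁ - 2 z₂ + d₄)`. Since `d₁ ≡ d₂` and
`d₃ ≡ d₄` mod `2πi`, `f = solF u v` and `g = solG u v` for two fixed linear forms. Both
exponents have `z₁`-coefficient `1`, so `∂f/∂z₁ = f` and `∂g/∂z₁ = g`, and the shift `(c₁, c₂)`
moves them by `2πi` and `4πi`, so it fixes `f` and `g`. Both equations thus reduce to the
identity `F² + 4FG + G² = uv = exp (2 z₁ - z₂ + d₂ + d₄)` for `F = solF u v`, `G = solG u v`. -/

open Complex
open scoped Real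

noncomputable def solF (u v : ℂ) : ℂ :=
  (1 / (6 * (√2 : ℂ))) * (-(3 - (√3 : ℂ)) * u + (3 + (√3 : ℂ)) * v)

noncomputable def solG (u v : ℂ) : ℂ :=
  (1 / (6 * (√2 : ℂ))) * ((3 + (√3 : ℂ)) * u - (3 - (√3 : ℂ)) * v)

lemma solF_mul (w u v : ℂ) : solF (w * u) (w * v) = w * solF u v := by
  unfold solF; ring

lemma solG_mul (w u v : ℂ) : solG (w * u) (w * v) = w * solG u v := by
  unfold solG; ring

/-- `X² + 4XY + Y² = (X + (2 + √3) Y) (X + (2 - √3) Y)`, and the coefficients of `solF`, `solG`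
are chosen so that these factors are `(1 + √3) u / √2` and `(√3 - 1) v / √2`. -/
lemma solF_sq_add_four_mul_solG_add_sq (u v : ℂ) :
    solF u v ^ 2 + 4 * solF u v * solG u v + solG u v ^ 2 = u * v := by
  have h2 : (√2 : ℂ) ^ 2 = 2 := by norm_cast; simp
  have h3 : (√3 : ℂ) ^ 2 = 3 := by norm_cast; simp
  have h2ne : (√2 : ℂ) ≠ 0 := by norm_cast; positivity
  unfold solF solG
  field_simp
  linear_combination 6 * (u + v) ^ 2 * h3 - 36 * u * v * h2

lemma deriv_comp_cexp_of_homogeneous {Φ : ℂ → ℂ → ℂ}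
    (hΦ : ∀ w u v, Φ (w * u) (w * v) = w * Φ u v) (a b z₁ z₂ : ℂ) :
    deriv (fun t => Φ (exp (t + z₂ + a)) (exp (t - 2 * z₂ + b))) z₁
      = Φ (exp (z₁ + z₂ + a)) (exp (z₁ - 2 * z₂ + b)) := by
  have hsplit : ∀ t, Φ (exp (t + z₂ + a)) (exp (t - 2 * z₂ + b))
      = exp t * Φ (exp (z₂ + a)) (exp (-2 * z₂ + b)) := fun t => by
    rw [← hΦ, ← exp_add, ← exp_add]
    congr 2 <;> ring
  simp only [hsplit]
  exact ((hasDerivAt_exp z₁).mul_const _).deriv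

lemma comp_cexp_shift (Φ : ℂ → ℂ → ℂ) (a b z₁ z₂ : ℂ) :
    Φ (exp (z₁ + 8 * π * I / 3 + (z₂ + -(2 * π * I) / 3) + a))
        (exp (z₁ + 8 * π * I / 3 - 2 * (z₂ + -(2 * π * I) / 3) + b))
      = Φ (exp (z₁ + z₂ + a)) (exp (z₁ - 2 * z₂ + b)) := by
  congr 1
  · exact exp_eq_exp_iff_exists_int.2 ⟨1, by push_cast; ring⟩
  · exact exp_eq_exp_iff_exists_int.2 ⟨2, by push_cast; ring⟩

theorem stmt_17 (d₁ d₂ d₃ d₄ c₁ c₂ : ℂ)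
    (hd12 : Complex.exp d₁ = Complex.exp d₂) (hd34 : Complex.exp d₃ = Complex.exp d₄)
    (hc₁ : c₁ = 8 * Real.pi * Complex.I / 3) (hc₂ : c₂ = -(2 * Real.pi * Complex.I) / 3)
    (f g : ℂ → ℂ → ℂ)
    (hf : ∀ z₁ z₂, f z₁ z₂ = (1 / (6 * (Real.sqrt 2 : ℂ)))
      * (-(3 - (Real.sqrt 3 : ℂ)) * Complex.exp (z₁ + z₂ + d₂)
        + (3 + (Real.sqrt 3 : ℂ)) * Complex.exp (z₁ - 2 * z₂ + d₄)))
    (hg : ∀ z₁ z₂, g z₁ z₂ = (1 / (6 * (Real.sqrt 2 : ℂ)))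
      * ((3 + (Real.sqrt 3 : ℂ)) * Complex.exp (z₁ + z₂ + d₁)
        - (3 - (Real.sqrt 3 : ℂ)) * Complex.exp (z₁ - 2 * z₂ + d₃))) :
    ∀ z₁ z₂ : ℂ,
      (deriv (fun t => f t z₂) z₁) ^ 2
          + 4 * (deriv (fun t => f t z₂) z₁) * g (z₁ + c₁) (z₂ + c₂)
          + g (z₁ + c₁) (z₂ + c₂) ^ 2 = Complex.exp (2 * z₁ - z₂ + d₁ + d₃) ∧
      (deriv (fun t => g t z₂) z₁) ^ 2
          + 4 * (deriv (fun t => g t z₂) z₁) * f (z₁ + c₁) (z₂ + c₂)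
          + f (z₁ + c₁) (z₂ + c₂) ^ 2 = Complex.exp (2 * z₁ - z₂ + d₂ + d₄) := by
  have hd₁ : ∀ x, exp (x + d₁) = exp (x + d₂) := fun x => by rw [exp_add, hd12, exp_add]
  have hd₃ : ∀ x, exp (x + d₃) = exp (x + d₄) := fun x => by rw [exp_add, hd34, exp_add]
  have hf' : f = fun z₁ z₂ => solF (exp (z₁ + z₂ + d₂)) (exp (z₁ - 2 * z₂ + d₄)) :=
    funext fun z₁ => funext (hf z₁)
  have hg' : g = fun z₁ z₂ => solG (exp (z₁ + z₂ + d₂)) (exp (z₁ - 2 * z₂ + d₄)) := by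
    funext z₁ z₂
    rw [hg, hd₁, hd₃]
    rfl
  clear hf hg
  intro z₁ z₂
  have hrhs : exp (2 * z₁ - z₂ + d₂ + d₄) = exp (z₁ + z₂ + d₂) * exp (z₁ - 2 * z₂ + d₄) := by
    rw [← exp_add]; ring_nf
  have hrhs' : exp (2 * z₁ - z₂ + d₁ + d₃) = exp (2 * z₁ - z₂ + d₂ + d₄) := by
    rw [hd₃, add_right_comm, hd₁, add_right_comm]
  subst hf' hg' hc₁ hc₂
  simp only [deriv_comp_cexp_of_homogeneous solF_mul, deriv_comp_cexp_of_homogeneous solG_mul,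
    comp_cexp_shift, hrhs', hrhs]
  have key := solF_sq_add_four_mul_solG_add_sq (exp (z₁ + z₂ + d₂)) (exp (z₁ - 2 * z₂ + d₄))
  exact ⟨key, by linear_combination key⟩
end

section
/- Let α, c₁, c₂ ∈ ℂ satisfy α² = −2 and exp(αc₁ + c₂) = −1. Define f, g : ℂ² → ℂ by f(z₁, z₂) := (1/(12√2))·((3 − √3)·exp(αz₁ + z₂ + 1) − (3 + √3)·exp(−(αz₁ + z₂ + 1))) and g(z₁, z₂) := (1/(12√2))·((3 − √3)·exp(−(αz₁ + z₂ + 1)) − (3 + √3)·exp(αz₁ + z₂ + 1)). Then for all z = (z₁, z₂) ∈ ℂ²: (∂²f/∂z₁²)(z)² + 4·(∂²f/∂z₁²)(z)·(g(z₁ + c₁, z₂ + c₂) − g(z)) + (g(z₁ + c₁, z₂ + c₂) − g(z))² = 1 and (∂²g/∂z₁²)(z)² + 4·(∂²g/∂z₁²)(z)·(f(z₁ + c₁, z₂ + c₂) − f(z)) + (f(z₁ + c₁, z₂ + c₂) − f(z))² = 1. -/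
/-!
Write `w = α z₁ + z₂ + 1`. Then `f = φ(w)` and `g = ψ(w)` with `φ(w) = P eʷ + Q e⁻ʷ` and
`ψ(w) = Q eʷ + P e⁻ʷ`. Since `α² = -2`, differentiating twice in `z₁`
multiplies `φ` and `ψ` by `-2`; since the shift `c` moves `w` by `αc₁ + c₂` and `e^{αc₁+c₂} = -1`,
the difference operator also multiplies them by `-2`. Both equations thus reduce to
`4 (φ² + 4φψ + ψ²) = 1`, which follows from `eʷ e⁻ʷ = 1` once `P² + Q² + 4PQ = 0` and
`PQ = -1/48`.
-/

open Complex

noncomputable def expCombo (P Q w : ℂ) : ℂ := P * exp w + Q * exp (-w)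

theorem expCombo_add_of_exp_eq_neg_one (P Q w : ℂ) {c : ℂ} (hc : exp c = -1) :
    expCombo P Q (w + c) = -expCombo P Q w := by
  have hc' : exp (-c) = -1 := by rw [exp_neg, hc]; norm_num
  rw [expCombo, expCombo, neg_add, exp_add, exp_add, hc, hc']
  ring

theorem hasDerivAt_expCombo_comp_affine (P Q a b z : ℂ) :
    HasDerivAt (fun t => expCombo P Q (a * t + b)) (a * expCombo P (-Q) (a * z + b)) z := by
  have hlin : HasDerivAt (fun t : ℂ => a * t + b) a z := by
    simpa using ((hasDerivAt_id z).const_mul a).add_const b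
  refine ((hlin.cexp.const_mul P).add (hlin.neg.cexp.const_mul Q)).congr_deriv ?_
  rw [expCombo, Pi.neg_apply]
  ring

theorem iteratedDeriv_two_expCombo_comp_affine (P Q a b z : ℂ) :
    iteratedDeriv 2 (fun t => expCombo P Q (a * t + b)) z = a ^ 2 * expCombo P Q (a * z + b) := by
  have hderiv : deriv (fun t => expCombo P Q (a * t + b)) = fun t => a * expCombo P (-Q) (a * t + b) :=
    funext fun t => (hasDerivAt_expCombo_comp_affine P Q a b t).deriv
  rw [iteratedDeriv_succ, iteratedDeriv_one, hderiv,
    ((hasDerivAt_expCombo_comp_affine P (-Q) a b z).const_mul a).deriv, neg_neg]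
  ring

theorem expCombo_sq_add_four_mul_add_sq {P Q : ℂ} (hPQ : P ^ 2 + Q ^ 2 + 4 * P * Q = 0) (w : ℂ) :
    expCombo P Q w ^ 2 + 4 * expCombo P Q w * expCombo Q P w + expCombo Q P w ^ 2
      = -12 * P * Q := by
  have hexp : exp w * exp (-w) = 1 := by rw [← exp_add, add_neg_cancel, exp_zero]
  simp only [expCombo]
  linear_combination (exp w ^ 2 + exp (-w) ^ 2 + 4) * hPQ + 4 * (P ^ 2 + Q ^ 2 + P * Q) * hexp

theorem expCombo_system {P Q α c : ℂ} (hα : α ^ 2 = -2) (hc : exp c = -1)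
    (hPQ : P ^ 2 + Q ^ 2 + 4 * P * Q = 0) (b z : ℂ) :
    (iteratedDeriv 2 (fun t => expCombo P Q (α * t + b)) z) ^ 2
        + 4 * (iteratedDeriv 2 (fun t => expCombo P Q (α * t + b)) z)
          * (expCombo Q P (α * z + b + c) - expCombo Q P (α * z + b))
        + (expCombo Q P (α * z + b + c) - expCombo Q P (α * z + b)) ^ 2
      = -48 * P * Q := by
  rw [iteratedDeriv_two_expCombo_comp_affine, expCombo_add_of_exp_eq_neg_one _ _ _ hc, hα]
  linear_combination 4 * expCombo_sq_add_four_mul_add_sq hPQ (α * z + b)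

theorem stmt_18 (α c₁ c₂ : ℂ)
    (hα : α ^ 2 = -2) (hc : Complex.exp (α * c₁ + c₂) = -1)
    (f g : ℂ → ℂ → ℂ)
    (hf : ∀ z₁ z₂, f z₁ z₂ = (1 / (12 * (Real.sqrt 2 : ℂ)))
      * ((3 - (Real.sqrt 3 : ℂ)) * Complex.exp (α * z₁ + z₂ + 1)
        - (3 + (Real.sqrt 3 : ℂ)) * Complex.exp (-(α * z₁ + z₂ + 1))))
    (hg : ∀ z₁ z₂, g z₁ z₂ = (1 / (12 * (Real.sqrt 2 : ℂ)))
      * ((3 - (Real.sqrt 3 : ℂ)) * Complex.exp (-(α * z₁ + z₂ + 1))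
        - (3 + (Real.sqrt 3 : ℂ)) * Complex.exp (α * z₁ + z₂ + 1))) :
    ∀ z₁ z₂ : ℂ,
      (iteratedDeriv 2 (fun t => f t z₂) z₁) ^ 2
          + 4 * (iteratedDeriv 2 (fun t => f t z₂) z₁)
            * (g (z₁ + c₁) (z₂ + c₂) - g z₁ z₂)
          + (g (z₁ + c₁) (z₂ + c₂) - g z₁ z₂) ^ 2 = 1 ∧
      (iteratedDeriv 2 (fun t => g t z₂) z₁) ^ 2
          + 4 * (iteratedDeriv 2 (fun t => g t z₂) z₁)
            * (f (z₁ + c₁) (z₂ + c₂) - f z₁ z₂)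
          + (f (z₁ + c₁) (z₂ + c₂) - f z₁ z₂) ^ 2 = 1 := by
  intro z₁ z₂
  set K : ℂ := 1 / (12 * (Real.sqrt 2 : ℂ))
  set P : ℂ := K * (3 - (Real.sqrt 3 : ℂ))
  set Q : ℂ := -(K * (3 + (Real.sqrt 3 : ℂ)))
  have hf' : ∀ z₁ z₂, f z₁ z₂ = expCombo P Q (α * z₁ + (z₂ + 1)) := fun z₁ z₂ => by
    rw [hf, expCombo, ← add_assoc]; ring
  have hg' : ∀ z₁ z₂, g z₁ z₂ = expCombo Q P (α * z₁ + (z₂ + 1)) := fun z₁ z₂ => by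
    rw [hg, expCombo, ← add_assoc]; ring
  have hshift : α * (z₁ + c₁) + (z₂ + c₂ + 1) = α * z₁ + (z₂ + 1) + (α * c₁ + c₂) := by ring
  have hsqrt2 : (Real.sqrt 2 : ℂ) ^ 2 = 2 := by rw [← ofReal_pow, Real.sq_sqrt zero_le_two]; norm_num
  have hsqrt3 : (Real.sqrt 3 : ℂ) ^ 2 = 3 := by rw [← ofReal_pow, Real.sq_sqrt zero_le_three]; norm_num
  have hK : 288 * K ^ 2 = 1 := by
    simp only [K, div_pow, mul_pow, hsqrt2]
    norm_num
  have hPQ : P ^ 2 + Q ^ 2 + 4 * P * Q = 0 := by linear_combination 6 * K ^ 2 * hsqrt3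
  have hQP : Q ^ 2 + P ^ 2 + 4 * Q * P = 0 := by linear_combination hPQ
  have hnorm : -48 * P * Q = 1 := by linear_combination -48 * K ^ 2 * hsqrt3 + hK
  refine ⟨?_, ?_⟩
  · rw [funext fun t => hf' t z₂, hg', hg', hshift, expCombo_system hα hc hPQ, hnorm]
  · rw [funext fun t => hg' t z₂, hf', hf', hshift, expCombo_system hα hc hQP, ← hnorm]
    ring
end
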